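/- arXiv:2304.12715 — 4 statements merged into one kernel-verified Lean document; each statement's English description precedes it below -/
import Mathlib

section
/- Let d ≥ 1 and let σ be a finite positive measure on ℝ^d with σ(ℝ^d) > 0. Then the upper dimension of σ equals sup{ α ≥ 0 : there exists a positive measure σ̃ with σ̃ ≤ σ, σ̃ ≠ 0, and σ̃(B_r(x)) ≤ r^α for all x ∈ ℝ^d and all 0 < r ≤ 1 }. -/
/-!
If `ν ≤ σ` satisfies `ν(B_r(x)) ≤ r^α` for `r ≤ 1`, then `ν ≤ μH[α]` (mass distribution
principle), so every Borel set of full `σ`-measure has positive `μH[α]`-measure and hence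
dimension at least `α`.

Conversely, suppose every Borel set of full `σ`-measure has dimension `> α > 0`, and let `F n`
be the set of points `x` with `σ(B_r(x)) ≤ n r^α` for all `r ≤ 2`. If all `F n` were `σ`-null,
then on a Borel set of full measure the upper `α`-density of `σ` would be infinite everywhere;
a Vitali covering argument shows that such a set is `μH[α]`-null, hence of dimension `≤ α`.
So some `F n` has positive measure, and a normalised restriction of `σ` to `F n` works: a ball of
radius `r` meeting `F n` lies in a ball of radius `2r` centred in `F n`.
-/

open MeasureTheory Filter Set ENNReal

noncomputable section

/-- Upper dimension of a measure: `inf {dim_H A : A Borel, σ(Aᶜ) = 0}`. -/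
def upperDimE (d : ℕ) (σ : Measure (EuclideanSpace ℝ (Fin d))) : ℝ≥0∞ :=
  ⨅ A : {A : Set (EuclideanSpace ℝ (Fin d)) // MeasurableSet A ∧ σ Aᶜ = 0}, dimH A.1

open Topology Metric

variable {X : Type*}

theorem le_hausdorffMeasure_of_closedBall_le_rpow [MetricSpace X] [MeasurableSpace X]
    [BorelSpace X] (ν : Measure X) {α : ℝ} (hα : 0 ≤ α)
    (hν : ∀ (x : X) (r : ℝ), 0 < r → r ≤ 1 → ν (closedBall x r) ≤ ENNReal.ofReal (r ^ α)) :
    ν ≤ μH[α] := by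
  refine Measure.le_hausdorffMeasure α ν 2⁻¹ (by norm_num) fun s hs => ?_
  rcases s.eq_empty_or_nonempty with rfl | ⟨x, hx⟩
  · simp
  have hs_top : ediam s ≠ ∞ := ne_top_of_le_ne_top (by norm_num) hs
  set D := (ediam s).toReal
  have hD : ediam s = ENNReal.ofReal D := (ofReal_toReal hs_top).symm
  have hD1 : D < 1 := ENNReal.ofReal_lt_one.1 (hD ▸ hs.trans_lt (by norm_num))
  have hbound : ∀ r ∈ Ioo D 1, ν s ≤ ENNReal.ofReal (r ^ α) := fun r hr => by
    have hsub : s ⊆ closedBall x r := fun y hy =>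
      (dist_le_diam_of_mem (isBounded_iff_ediam_ne_top.2 hs_top) hy hx).trans hr.1.le
    exact (measure_mono hsub).trans (hν x r (toReal_nonneg.trans_lt hr.1) hr.2.le)
  have htend : Tendsto (fun r : ℝ => ENNReal.ofReal (r ^ α)) (𝓝[>] D)
      (𝓝 (ENNReal.ofReal (D ^ α))) :=
    (ENNReal.continuous_ofReal.comp (Real.continuous_rpow_const hα)).continuousWithinAt
  rw [hD, ofReal_rpow_of_nonneg toReal_nonneg hα]
  exact ge_of_tendsto htend (eventually_of_mem (Ioo_mem_nhdsGT hD1) hbound)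

theorem ofReal_le_dimH_of_le_hausdorffMeasure [EMetricSpace X] [MeasurableSpace X]
    [BorelSpace X] {ν : Measure X} {α : ℝ} (hα : 0 ≤ α) (hν : ν ≠ 0) (hνH : ν ≤ μH[α])
    {A : Set X} (hA : ν Aᶜ = 0) : ENNReal.ofReal α ≤ dimH A := by
  have hνA : ν A ≠ 0 := fun h0 =>
    hν (Measure.measure_univ_eq_zero.1 (by simpa using measure_union_null h0 hA))
  have hHA : μH[α.toNNReal] A ≠ 0 := by
    rw [Real.coe_toNNReal _ hα]
    exact fun h0 => hνA (nonpos_iff_eq_zero.1 (h0 ▸ Measure.le_iff'.1 hνH A))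
  exact le_dimH_of_hausdorffMeasure_ne_zero hHA

theorem restrict_closedBall_le_of_forall_mem [PseudoMetricSpace X] [MeasurableSpace X]
    [OpensMeasurableSpace X] (σ : Measure X) (E : Set X) (x : X) (r : ℝ) {b : ℝ≥0∞}
    (hb : ∀ y ∈ E, σ (closedBall y (2 * r)) ≤ b) :
    σ.restrict E (closedBall x r) ≤ b := by
  rw [Measure.restrict_apply measurableSet_closedBall]
  rcases (closedBall x r ∩ E).eq_empty_or_nonempty with h | ⟨y, hyx, hyE⟩
  · simp [h]
  refine (measure_mono fun z hz => ?_).trans (hb y hyE)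
  rw [mem_closedBall] at hyx ⊢
  linarith [dist_triangle_right z y x, mem_closedBall.1 hz.1]

theorem exists_frostman_measure_of_forall_mem [PseudoMetricSpace X] [MeasurableSpace X]
    [OpensMeasurableSpace X] (σ : Measure X) {E : Set X} (hE : σ E ≠ 0) {α : ℝ} {C : ℝ≥0∞}
    (hC : C ≠ ∞)
    (hball : ∀ y ∈ E, ∀ r ∈ Ioc (0 : ℝ) 2, σ (closedBall y r) ≤ C * ENNReal.ofReal (r ^ α)) :
    ∃ ν : Measure X, ν ≠ 0 ∧ ν ≤ σ ∧ ∀ (x : X) (r : ℝ), 0 < r → r ≤ 1 →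
      ν (closedBall x r) ≤ ENNReal.ofReal (r ^ α) := by
  set K := max (C * ENNReal.ofReal (2 ^ α)) 1
  have hK0 : K ≠ 0 := (zero_lt_one.trans_le (le_max_right _ _)).ne'
  have hKtop : K ≠ ∞ := max_ne_top (mul_ne_top hC ofReal_ne_top) one_ne_top
  have hKinv : K⁻¹ ≤ 1 := ENNReal.inv_le_one.2 (le_max_right _ _)
  refine ⟨K⁻¹ • σ.restrict E, ?_, ?_, fun x r hr hr1 => ?_⟩
  · rw [Ne, ← Measure.measure_univ_eq_zero, Measure.smul_apply, Measure.restrict_apply_univ,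
      smul_eq_mul, mul_eq_zero, not_or]
    exact ⟨ENNReal.inv_ne_zero.2 hKtop, hE⟩
  · refine Measure.le_iff'.2 fun s => ?_
    calc K⁻¹ * σ.restrict E s ≤ 1 * σ.restrict E s := by gcongr
      _ ≤ σ s := by rw [one_mul]; exact Measure.le_iff'.1 Measure.restrict_le_self s
  · have hE_ball : σ.restrict E (closedBall x r) ≤ C * ENNReal.ofReal ((2 * r) ^ α) :=
      restrict_closedBall_le_of_forall_mem σ E x r fun y hy =>
        hball y hy (2 * r) ⟨by positivity, by linarith⟩
    rw [Real.mul_rpow zero_le_two hr.le, ENNReal.ofReal_mul (by positivity), ← mul_assoc]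
      at hE_ball
    calc (K⁻¹ • σ.restrict E) (closedBall x r)
        ≤ K⁻¹ * (C * ENNReal.ofReal (2 ^ α) * ENNReal.ofReal (r ^ α)) := by
          rw [Measure.smul_apply, smul_eq_mul]; gcongr
      _ ≤ K⁻¹ * (K * ENNReal.ofReal (r ^ α)) := by gcongr; exact le_max_left _ _
      _ = ENNReal.ofReal (r ^ α) := ENNReal.inv_mul_cancel_left hK0 hKtop

theorem exists_countable_disjoint_closedBall_cover [PseudoMetricSpace X]
    [TopologicalSpace.SeparableSpace X] (A : Set X) (r : X → ℝ) {R : ℝ}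
    (hr : ∀ x ∈ A, r x ∈ Ioc 0 R) :
    ∃ u ⊆ A, u.Countable ∧ (u.PairwiseDisjoint fun b => closedBall b (r b)) ∧
      A ⊆ ⋃ b ∈ u, closedBall b (4 * r b) := by
  obtain ⟨u, huA, hu_disj, hu_cover⟩ :=
    Vitali.exists_disjoint_subfamily_covering_enlargement_closedBall A id r R
      (fun x hx => (hr x hx).2) 4 (by norm_num)
  refine ⟨u, huA, hu_disj.countable_of_nonempty_interior fun b hb => ?_, hu_disj, fun x hx => ?_⟩
  · exact (nonempty_ball.2 (hr b (huA hb)).1).mono ball_subset_interior_closedBall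
  · obtain ⟨b, hb, hsub⟩ := hu_cover x hx
    exact mem_biUnion hb (hsub (mem_closedBall_self (hr x hx).1.le))

theorem ediam_closedBall_mul_rpow_le [PseudoMetricSpace X] (x : X) {k r α : ℝ} (hk : 0 ≤ k)
    (hr : 0 ≤ r) (hα : 0 ≤ α) :
    ediam (closedBall x (k * r)) ^ α ≤ ENNReal.ofReal ((2 * k) ^ α) * ENNReal.ofReal (r ^ α) := by
  calc ediam (closedBall x (k * r)) ^ α ≤ ENNReal.ofReal (2 * k * r) ^ α := by
        gcongr
        exact ediam_le_of_forall_dist_le fun y hy z hz => by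
          linarith [dist_triangle_right y z x, mem_closedBall.1 hy, mem_closedBall.1 hz]
    _ = ENNReal.ofReal ((2 * k) ^ α) * ENNReal.ofReal (r ^ α) := by
        rw [ofReal_rpow_of_nonneg (by positivity) hα, Real.mul_rpow (by positivity) hr,
          ENNReal.ofReal_mul (by positivity)]

theorem exists_countable_closedBall_cover_tsum_ediam_rpow_le [PseudoMetricSpace X]
    [TopologicalSpace.SeparableSpace X] [MeasurableSpace X] [OpensMeasurableSpace X]
    (σ : Measure X) {α : ℝ} (hα : 0 ≤ α) {A : Set X} (ρ : X → ℝ) {R : ℝ}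
    (hρ : ∀ x ∈ A, ρ x ∈ Ioc 0 R) {c : ℝ≥0∞}
    (hρc : ∀ x ∈ A, ENNReal.ofReal (ρ x ^ α) ≤ c * σ (closedBall x (ρ x))) :
    ∃ u ⊆ A, u.Countable ∧ A ⊆ ⋃ b ∈ u, closedBall b (4 * ρ b) ∧
      ∑' b : u, ediam (closedBall (b : X) (4 * ρ b)) ^ α ≤
        ENNReal.ofReal ((2 * 4) ^ α) * (c * σ univ) := by
  obtain ⟨u, huA, hu_cnt, hu_disj, hu_cover⟩ := exists_countable_disjoint_closedBall_cover A ρ hρ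
  refine ⟨u, huA, hu_cnt, hu_cover, ?_⟩
  set K := ENNReal.ofReal ((2 * 4) ^ α)
  calc ∑' b : u, ediam (closedBall (b : X) (4 * ρ b)) ^ α
      ≤ ∑' b : u, K * (c * σ (closedBall b (ρ b))) := ENNReal.tsum_le_tsum fun b =>
        (ediam_closedBall_mul_rpow_le (b : X) (k := 4) (by norm_num) (hρ b (huA b.2)).1.le hα).trans
          (by gcongr; exact hρc b (huA b.2))
    _ = K * (c * σ (⋃ b ∈ u, closedBall b (ρ b))) := by
        rw [measure_biUnion hu_cnt hu_disj fun b _ => measurableSet_closedBall,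
          ENNReal.tsum_mul_left, ENNReal.tsum_mul_left]
    _ ≤ K * (c * σ univ) := by gcongr; exact subset_univ _

theorem hausdorffMeasure_eq_zero_of_forall_exists_closedBall_gt [MetricSpace X]
    [TopologicalSpace.SeparableSpace X] [MeasurableSpace X] [BorelSpace X] (σ : Measure X)
    [IsFiniteMeasure σ] {α : ℝ} (hα : 0 < α) {A : Set X} {R : ℝ}
    (hA : ∀ x ∈ A, ∀ n : ℕ, ∃ r ∈ Ioc 0 R,
      (n : ℝ≥0∞) * ENNReal.ofReal (r ^ α) < σ (closedBall x r)) :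
    μH[α] A = 0 := by
  choose! ρ hρ hρσ using fun x hx (n : ℕ) => hA x hx (n + 1)
  set ε : ℕ → ℝ≥0∞ := fun n => ENNReal.ofReal ((2 * 4) ^ α) * (((n + 1 : ℕ) : ℝ≥0∞)⁻¹ * σ univ)
  choose u huA hu_cnt hu_cover hu_sum using fun n =>
    exists_countable_closedBall_cover_tsum_ediam_rpow_le σ hα.le (ρ · n) (fun x hx => hρ x hx n)
      fun x hx => (ENNReal.mul_le_iff_le_inv (by simp) (natCast_ne_top _)).1 (hρσ x hx n).le
  have := fun n => (hu_cnt n).to_subtype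
  set t : ∀ n, u n → Set X := fun n b => closedBall (b : X) (4 * ρ b n)
  have hε : Tendsto ε atTop (𝓝 0) := by
    have hinv : Tendsto (fun n : ℕ => ((n + 1 : ℕ) : ℝ≥0∞)⁻¹) atTop (𝓝 0) :=
      ENNReal.tendsto_inv_nat_nhds_zero.comp (tendsto_add_atTop_nat 1)
    simpa [ε] using ENNReal.Tendsto.const_mul
      (ENNReal.Tendsto.mul_const hinv (Or.inr (measure_ne_top σ univ))) (Or.inr ofReal_ne_top)
  have hε_rpow : Tendsto (fun n => ε n ^ α⁻¹) atTop (𝓝 0) := by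
    have := ((ENNReal.continuous_rpow_const (y := α⁻¹)).tendsto 0).comp hε
    rwa [ENNReal.zero_rpow_of_pos (inv_pos.2 hα)] at this
  have hdiam : ∀ n (b : u n), ediam (t n b) ≤ ε n ^ α⁻¹ := fun n b =>
    (le_rpow_inv_iff hα).2 ((ENNReal.le_tsum b).trans (hu_sum n))
  refine nonpos_iff_eq_zero.1 ?_
  calc μH[α] A ≤ liminf (fun n => ∑' b : u n, ediam (t n b) ^ α) atTop :=
        Measure.hausdorffMeasure_le_liminf_tsum α A _ hε_rpow t (Eventually.of_forall hdiam)
          (Eventually.of_forall fun n => (hu_cover n).trans_eq (biUnion_eq_iUnion _ _))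
    _ ≤ liminf ε atTop := liminf_le_liminf (Eventually.of_forall hu_sum)
    _ = 0 := hε.liminf_eq

theorem exists_frostman_measure_of_lt_dimH [MetricSpace X] [TopologicalSpace.SeparableSpace X]
    [MeasurableSpace X] [BorelSpace X] (σ : Measure X) [IsFiniteMeasure σ] {α : ℝ} (hα : 0 < α)
    (h : ∀ A : Set X, MeasurableSet A → σ Aᶜ = 0 → ENNReal.ofReal α < dimH A) :
    ∃ ν : Measure X, ν ≠ 0 ∧ ν ≤ σ ∧ ∀ (x : X) (r : ℝ), 0 < r → r ≤ 1 →
      ν (closedBall x r) ≤ ENNReal.ofReal (r ^ α) := by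
  set F : ℕ → Set X := fun n =>
    {x | ∀ r ∈ Ioc (0 : ℝ) 2, σ (closedBall x r) ≤ n * ENNReal.ofReal (r ^ α)}
  by_cases hF : ∃ n, σ (F n) ≠ 0
  · obtain ⟨n, hn⟩ := hF
    exact exists_frostman_measure_of_forall_mem σ hn (natCast_ne_top n) fun y hy => hy
  push Not at hF
  set N := toMeasurable σ (⋃ n, F n)
  have hN : σ N = 0 := by rw [measure_toMeasurable]; exact measure_iUnion_null hF
  have hH : μH[α.toNNReal] Nᶜ = 0 := by
    rw [Real.coe_toNNReal _ hα.le]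
    refine hausdorffMeasure_eq_zero_of_forall_exists_closedBall_gt σ hα (R := 2) fun x hx n => ?_
    have hxF : x ∉ F n := fun hxF => hx (subset_toMeasurable _ _ (mem_iUnion_of_mem n hxF))
    simpa [F, and_assoc] using hxF
  have hdim : dimH Nᶜ ≤ ENNReal.ofReal α := dimH_le_of_hausdorffMeasure_ne_top (hH ▸ zero_ne_top)
  exact absurd (h Nᶜ (measurableSet_toMeasurable σ _).compl (by rwa [compl_compl]))
    hdim.not_gt

theorem statement12_general (d : ℕ) (σ : Measure (EuclideanSpace ℝ (Fin d)))
    (hfin : IsFiniteMeasure σ) :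
    upperDimE d σ =
      ⨆ p : {α : ℝ // 0 ≤ α ∧ ∃ σ' : Measure (EuclideanSpace ℝ (Fin d)),
          σ' ≠ 0 ∧ σ' ≤ σ ∧ ∀ (x : EuclideanSpace ℝ (Fin d)) (r : ℝ), 0 < r → r ≤ 1 →
            σ' (Metric.closedBall x r) ≤ ENNReal.ofReal (r ^ α)},
        ENNReal.ofReal p.1 := by
  refine le_antisymm (le_of_forall_lt fun c hc => ?_) (iSup_le fun ⟨α, hα, ν, hν, hνσ, hball⟩ =>
    le_iInf fun ⟨A, _, hA⟩ => ?_)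
  · obtain ⟨α, -, hcα, hα_lt⟩ := ENNReal.lt_iff_exists_real_btwn.1 hc
    have hα : 0 < α := ENNReal.ofReal_pos.1 (zero_le.trans_lt hcα)
    obtain ⟨ν, hν, hνσ, hball⟩ := exists_frostman_measure_of_lt_dimH σ hα
      fun A hA hAc => hα_lt.trans_le (iInf_le_of_le ⟨A, hA, hAc⟩ le_rfl)
    exact hcα.trans_le (le_iSup_of_le ⟨α, hα.le, ν, hν, hνσ, hball⟩ le_rfl)
  · exact ofReal_le_dimH_of_le_hausdorffMeasure hα hν
      (le_hausdorffMeasure_of_closedBall_le_rpow ν hα hball)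
      (nonpos_iff_eq_zero.1 ((Measure.le_iff'.1 hνσ Aᶜ).trans_eq hA))

/-- For a nonzero finite positive measure `σ` on `ℝ^d`, the upper dimension
of `σ` equals the supremum of all `α ≥ 0` for which there exists a nonzero measure `σ̃ ≤ σ`
with `σ̃(B_r(x)) ≤ r^α` for all `x` and all `0 < r ≤ 1`. -/
theorem statement12 (d : ℕ) (hd : 1 ≤ d) (σ : Measure (EuclideanSpace ℝ (Fin d)))
    (hfin : IsFiniteMeasure σ) (hne : σ ≠ 0) :
    upperDimE d σ =
      ⨆ p : {α : ℝ // 0 ≤ α ∧ ∃ σ' : Measure (EuclideanSpace ℝ (Fin d)),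
          σ' ≠ 0 ∧ σ' ≤ σ ∧ ∀ (x : EuclideanSpace ℝ (Fin d)) (r : ℝ), 0 < r → r ≤ 1 →
            σ' (Metric.closedBall x r) ≤ ENNReal.ofReal (r ^ α)},
        ENNReal.ofReal p.1 :=
  statement12_general d σ hfin
end
end

section
/- Let Q = (ℝ/ℤ)² be the flat 2-torus and let α ∈ (0,2). There is a constant c > 0 depending only on α such that: if σ is a positive measure on Q satisfying σ(B_r(x)) ≤ r^α for every x ∈ Q and every 0 < r ≤ 1, and if X₁,…,X_N ∈ Q and φ₁,…,φ_N ∈ (0,1] satisfy ∑ᵢ φᵢ = σ(Q), then W_per²( ∑ᵢ φᵢ δ_{Xᵢ}, σ ) ≥ c · ∑ᵢ φᵢ^{(α+2)/α}. -/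
/-!
Group the atoms by location and let `Φ` be the total mass sitting at a point `x`. The ball of
radius `r ≤ 1` around `x` receives at most `r^α` of `σ`, so any transport plan moves at least
`Φ - r^α` of that mass farther than `r`, at cost `≥ r² (Φ - r^α)`; these costs add up over the
distinct points because they are paid on disjoint sets `{x} × (far from x)`. Taking `r^α = Φ/2`
(or `r = 1` when `Φ > 2`) gives `2^{-p} min (Φ^p, Φ)` with `p = (α+2)/α`, which dominates
`2^{-p} ∑ φᵢ^p` over the atoms at `x` because `∑ φᵢ^p ≤ (∑ φᵢ)^p` and `φᵢ^p ≤ φᵢ ≤ 1`.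
-/

open MeasureTheory Filter Set ENNReal

noncomputable section

instance fact1 : Fact ((0:ℝ) < 1) := ⟨one_pos⟩

/-- The flat 2-torus `Q = (ℝ/ℤ)²`. -/
abbrev Q2 : Type := AddCircle (1 : ℝ) × AddCircle (1 : ℝ)

/-- The geodesic (flat) distance on the 2-torus. -/
def dQ (p q : Q2) : ℝ := Real.sqrt (dist p.1 q.1 ^ 2 + dist p.2 q.2 ^ 2)

/-- The ball of radius `r` around `x` for the flat distance. -/
def ballQ (x : Q2) (r : ℝ) : Set Q2 := {y | dQ x y ≤ r}

/-- Squared periodic `2`-Wasserstein distance on the flat 2-torus. -/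
def W2perQ (ν₁ ν₂ : Measure Q2) : ℝ≥0∞ :=
  ⨅ (π : Measure (Q2 × Q2)) (_ : π.map Prod.fst = ν₁ ∧ π.map Prod.snd = ν₂),
    ∫⁻ p, ENNReal.ofReal (dQ p.1 p.2 ^ 2) ∂π

open Finset

lemma Finset.sum_rpow_le_rpow_sum {ι : Type*} (s : Finset ι) {f : ι → ℝ} (hf : ∀ i ∈ s, 0 ≤ f i)
    {p : ℝ} (hp : 1 ≤ p) : ∑ i ∈ s, f i ^ p ≤ (∑ i ∈ s, f i) ^ p := by
  induction s using Finset.cons_induction with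
  | empty => simp [Real.zero_rpow (by linarith : p ≠ 0)]
  | cons a s _ ih =>
    simp only [sum_cons, forall_mem_cons] at hf ⊢
    calc f a ^ p + ∑ i ∈ s, f i ^ p ≤ f a ^ p + (∑ i ∈ s, f i) ^ p := by gcongr; exact ih hf.2
      _ ≤ (f a + ∑ i ∈ s, f i) ^ p :=
        Real.add_rpow_le_rpow_add hf.1 (sum_nonneg hf.2) hp

/-- The witness is `r^α = Φ/2` when `Φ ≤ 2`, and `r = 1` otherwise. -/
lemma exists_radius_rpow_le_sq_mul_sub {α Φ : ℝ} (hα : 0 < α) (hΦ : 0 < Φ) :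
    ∃ r : ℝ, 0 < r ∧ r ≤ 1 ∧
      (2 : ℝ) ^ (-((α + 2) / α)) * min (Φ ^ ((α + 2) / α)) Φ ≤ r ^ 2 * (Φ - r ^ α) := by
  set p := (α + 2) / α
  have hp : 1 ≤ p := by rw [le_div_iff₀ hα]; linarith
  rcases le_or_gt Φ 2 with hΦ2 | hΦ2
  · have hb : 0 ≤ Φ / 2 := by positivity
    refine ⟨(Φ / 2) ^ α⁻¹, by positivity, Real.rpow_le_one hb (by linarith) (by positivity), ?_⟩
    have hrα : ((Φ / 2) ^ α⁻¹) ^ α = Φ / 2 := Real.rpow_inv_rpow hb hα.ne'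
    have hr2 : ((Φ / 2) ^ α⁻¹) ^ 2 * (Φ / 2) = (Φ / 2) ^ p := by
      rw [← Real.rpow_natCast, ← Real.rpow_mul hb, ← Real.rpow_add_one (by positivity)]
      congr 1
      simp only [p]
      field_simp
      ring
    calc (2 : ℝ) ^ (-p) * min (Φ ^ p) Φ ≤ (2 : ℝ) ^ (-p) * Φ ^ p := by gcongr; exact min_le_left _ _
      _ = (Φ / 2) ^ p := by rw [Real.div_rpow hΦ.le zero_le_two, Real.rpow_neg zero_le_two]; ring
      _ = _ := by rw [hrα, ← hr2]; ring
  · refine ⟨1, one_pos, le_rfl, ?_⟩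
    have h2p : (2 : ℝ) ^ (-p) ≤ 2⁻¹ := by
      rw [← Real.rpow_neg_one]
      exact Real.rpow_le_rpow_of_exponent_le one_le_two (by linarith)
    calc (2 : ℝ) ^ (-p) * min (Φ ^ p) Φ ≤ 2⁻¹ * Φ := by gcongr; exact min_le_right _ _
      _ ≤ 1 ^ 2 * (Φ - 1 ^ α) := by rw [Real.one_rpow]; linarith

lemma MeasureTheory.Measure.finset_sum_smul_dirac_singleton {α ι : Type*} [MeasurableSpace α]
    [MeasurableSingletonClass α] [DecidableEq α] (s : Finset ι) (w : ι → ℝ≥0∞) (X : ι → α)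
    (x : α) : (∑ i ∈ s, w i • Measure.dirac (X i)) {x} = ∑ i ∈ s with X i = x, w i := by
  simp [Measure.finsetSum_apply, Set.indicator, sum_filter]

section Coupling

variable {α : Type*} [MeasurableSpace α] {μ ν : Measure α} {π : Measure (α × α)}

lemma measure_le_measure_prod_compl_add (h₁ : π.map Prod.fst = μ) (h₂ : π.map Prod.snd = ν)
    {A : Set α} (hA : MeasurableSet A) (B : Set α) : μ A ≤ π (A ×ˢ Bᶜ) + ν B := by
  calc μ A = π (Prod.fst ⁻¹' A) := by rw [← h₁, Measure.map_apply measurable_fst hA]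
    _ ≤ π (A ×ˢ Bᶜ ∪ Prod.snd ⁻¹' B) :=
      measure_mono fun q hq => by by_cases hb : q.2 ∈ B <;> simp_all
    _ ≤ π (A ×ˢ Bᶜ) + π (Prod.snd ⁻¹' B) := measure_union_le _ _
    _ ≤ π (A ×ˢ Bᶜ) + ν B := by
      gcongr
      rw [← h₂]
      exact Measure.le_map_apply measurable_snd.aemeasurable B

variable [MeasurableSingletonClass α] {d : α → α → ℝ}

lemma sum_sq_mul_measure_far_le_lintegral (hd : Measurable (Function.uncurry d)) (S : Finset α)
    {r : α → ℝ} (hr : ∀ x ∈ S, 0 ≤ r x) :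
    ∑ x ∈ S, ENNReal.ofReal (r x ^ 2) * π ({x} ×ˢ {y | d x y ≤ r x}ᶜ) ≤
      ∫⁻ q, ENNReal.ofReal (d q.1 q.2 ^ 2) ∂π := by
  set t : α → Set (α × α) := fun x => {x} ×ˢ {y | d x y ≤ r x}ᶜ
  have ht : ∀ x ∈ S, MeasurableSet (t x) := fun x _ =>
    (measurableSet_singleton x).prod
      (measurableSet_le (hd.comp measurable_prodMk_left) measurable_const).compl
  have hdisj : (S : Set α).PairwiseDisjoint t := fun x _ y _ hxy =>
    Set.disjoint_left.2 fun q hx hy => hxy (hx.1.symm.trans hy.1)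
  calc ∑ x ∈ S, ENNReal.ofReal (r x ^ 2) * π (t x)
      = ∑ x ∈ S, ∫⁻ _ in t x, ENNReal.ofReal (r x ^ 2) ∂π := by simp only [setLIntegral_const]
    _ ≤ ∑ x ∈ S, ∫⁻ q in t x, ENNReal.ofReal (d q.1 q.2 ^ 2) ∂π := by
      refine sum_le_sum fun x hx => setLIntegral_mono' (ht x hx) ?_
      rintro ⟨x', y⟩ ⟨rfl, hy⟩
      have hy : r x' < d x' y := not_le.1 hy
      exact ENNReal.ofReal_le_ofReal (by nlinarith [hr x' hx])
    _ = ∫⁻ q in ⋃ x ∈ S, t x, ENNReal.ofReal (d q.1 q.2 ^ 2) ∂π :=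
      (lintegral_biUnion_finset hdisj ht _).symm
    _ ≤ ∫⁻ q, ENNReal.ofReal (d q.1 q.2 ^ 2) ∂π := setLIntegral_le_lintegral _ _

lemma sum_sq_mul_sub_le_lintegral (hd : Measurable (Function.uncurry d))
    (h₁ : π.map Prod.fst = μ) (h₂ : π.map Prod.snd = ν) (S : Finset α) {r : α → ℝ}
    (hr : ∀ x ∈ S, 0 ≤ r x) :
    ∑ x ∈ S, ENNReal.ofReal (r x ^ 2) * (μ {x} - ν {y | d x y ≤ r x}) ≤
      ∫⁻ q, ENNReal.ofReal (d q.1 q.2 ^ 2) ∂π :=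
  (sum_le_sum fun x _ => mul_le_mul_right (tsub_le_iff_right.2 <|
    measure_le_measure_prod_compl_add h₁ h₂ (measurableSet_singleton x) _) _).trans
    (sum_sq_mul_measure_far_le_lintegral hd S hr)

end Coupling

lemma measurable_dQ : Measurable (Function.uncurry dQ) := by
  refine Continuous.measurable ?_
  unfold Function.uncurry dQ
  fun_prop

/-- non-standard quantization bound. For `α ∈ (0,2)` there is `c > 0`
depending only on `α` such that, whenever `σ(B_r(x)) ≤ r^α` for all `x` and `0 < r ≤ 1`, and
`∑ᵢ φᵢ = σ(Q)` with `φᵢ ∈ (0,1]`, one has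
`W_per²(∑ᵢ φᵢ δ_{Xᵢ}, σ) ≥ c ∑ᵢ φᵢ^{(α+2)/α}`. -/
theorem statement13 (α : ℝ) (hα : α ∈ Ioo (0:ℝ) 2) :
    ∃ c : ℝ, 0 < c ∧ ∀ σ : Measure Q2, IsFiniteMeasure σ →
      (∀ (x : Q2) (r : ℝ), 0 < r → r ≤ 1 → σ (ballQ x r) ≤ ENNReal.ofReal (r ^ α)) →
      ∀ (N : ℕ) (X : Fin N → Q2) (φ : Fin N → ℝ),
        (∀ i, φ i ∈ Ioc (0:ℝ) 1) → (∑ i, φ i) = (σ Set.univ).toReal →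
        ENNReal.ofReal (c * ∑ i, φ i ^ ((α + 2)/α)) ≤
          W2perQ (∑ i, ENNReal.ofReal (φ i) • Measure.dirac (X i)) σ := by
  classical
  set p := (α + 2) / α
  have hp : 1 ≤ p := by rw [le_div_iff₀ hα.1]; linarith
  refine ⟨2 ^ (-p), by positivity, fun σ _ hball N X φ hφ _ => le_iInf₂ fun π hπ => ?_⟩
  have hφ0 : ∀ i, 0 ≤ φ i := fun i => (hφ i).1.le
  set S := Finset.univ.image X
  set Φ : Q2 → ℝ := fun x => ∑ i with X i = x, φ i
  have hΦ : ∀ x ∈ S, 0 < Φ x := by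
    simp only [S, Finset.mem_image]
    rintro x ⟨i, -, rfl⟩
    exact sum_pos (fun j _ => (hφ j).1) ⟨i, by simp⟩
  choose! r hr0 hr1 hr using fun x hx => exists_radius_rpow_le_sq_mul_sub hα.1 (hΦ x hx)
  have hcell : ∀ x, ∑ i with X i = x, φ i ^ p ≤ min (Φ x ^ p) (Φ x) := fun x =>
    le_min (sum_rpow_le_rpow_sum _ (fun i _ => hφ0 i) hp)
      (sum_le_sum fun i _ => Real.rpow_le_self_of_le_one (hφ0 i) (hφ i).2 hp)
  calc ENNReal.ofReal (2 ^ (-p) * ∑ i, φ i ^ p)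
      = ∑ x ∈ S, ENNReal.ofReal (2 ^ (-p) * ∑ i with X i = x, φ i ^ p) := by
        rw [← sum_fiberwise_of_maps_to fun i _ => Finset.mem_image_of_mem X (Finset.mem_univ i),
          mul_sum, ENNReal.ofReal_sum_of_nonneg fun x _ =>
            mul_nonneg (by positivity) (sum_nonneg fun i _ => Real.rpow_nonneg (hφ0 i) _)]
    _ ≤ ∑ x ∈ S, ENNReal.ofReal (r x ^ 2) *
          (ENNReal.ofReal (Φ x) - ENNReal.ofReal (r x ^ α)) := by
        gcongr with x hx
        rw [← ENNReal.ofReal_sub _ (Real.rpow_nonneg (hr0 x hx).le _),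
          ← ENNReal.ofReal_mul (by positivity)]
        exact ENNReal.ofReal_le_ofReal
          ((mul_le_mul_of_nonneg_left (hcell x) (by positivity)).trans (hr x hx))
    _ ≤ ∑ x ∈ S, ENNReal.ofReal (r x ^ 2) *
          ((∑ i, ENNReal.ofReal (φ i) • Measure.dirac (X i)) {x} - σ (ballQ x (r x))) := by
        gcongr with x hx
        · rw [Measure.finset_sum_smul_dirac_singleton,
            ENNReal.ofReal_sum_of_nonneg fun i _ => hφ0 i]
        · exact hball x (r x) (hr0 x hx) (hr1 x hx)
    _ ≤ _ := sum_sq_mul_sub_le_lintegral measurable_dQ hπ.1 hπ.2 S fun x hx => (hr0 x hx).le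
end
end

section
/- There exist universal constants c, C > 0 such that for all Φ, T, λ > 0, c · ( T + λΦ³/(1+λT) ) ≤ E(Φ,T,λ) ≤ C · ( T + λΦ³/(1+λT) ). -/
open MeasureTheory Filter Set ENNReal

noncomputable section

/-- `T_λ = T + 1/λ`. -/
def Tlam (T lam : ℝ) : ℝ := T + 1/lam

/-- Admissibility of a Lagrangian pair `(X, D)` in the class `𝒞(Φ, Tl, X̄)`: for a.e.
`x ∈ [-Φ/2, Φ/2]`, the curve `t ↦ X(t,x)` is absolutely continuous on `[0,Tl]` with
(integrable) derivative `D(·,x)`, starts at `X̄` and ends at `x`. -/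
structure LagAdm (Φ Tl Xbar : ℝ) (X D : ℝ → ℝ → ℝ) : Prop where
  measX : Measurable (Function.uncurry X)
  measD : Measurable (Function.uncurry D)
  curves : ∀ᵐ x ∂(volume.restrict (Icc (-(Φ/2)) (Φ/2))),
    X 0 x = Xbar ∧ X Tl x = x ∧
    IntegrableOn (fun t => D t x) (Icc 0 Tl) ∧
    ∀ t ∈ Icc 0 Tl, X t x = Xbar + ∫ s in (0:ℝ)..t, D s x

/-- Multiplicity `φ_X(y,t)`: the Lebesgue measure of `{x ∈ [-Φ/2,Φ/2] : X(t,x) = y}`. -/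
def mult (Φ : ℝ) (X : ℝ → ℝ → ℝ) (y t : ℝ) : ℝ≥0∞ :=
  volume {x | x ∈ Icc (-(Φ/2)) (Φ/2) ∧ X t x = y}

/-- The Lagrangian energy `𝓛_{λ,T,Φ}(X) = ∫₀^T ∫ 1/φ_X(X(t,x),t) dx dt
+ ∫₀^{T_λ} ∫ |∂_t X|² dx dt` (with the convention `1/0 = +∞`). -/
def lagEnergy (Φ T lam : ℝ) (X D : ℝ → ℝ → ℝ) : ℝ≥0∞ :=
  (∫⁻ t in Ioo (0:ℝ) T, ∫⁻ x in Icc (-(Φ/2)) (Φ/2), (mult Φ X (X t x) t)⁻¹) +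
    ∫⁻ t in Ioo (0:ℝ) (Tlam T lam), ∫⁻ x in Icc (-(Φ/2)) (Φ/2),
      ENNReal.ofReal ((D t x)^2)

/-- `E(Φ,T,λ,X̄)`: the infimum of the Lagrangian energy over `𝒞(Φ,T_λ,X̄)`. -/
def lagE (Φ T lam Xbar : ℝ) : ℝ≥0∞ :=
  ⨅ (X : ℝ → ℝ → ℝ) (D : ℝ → ℝ → ℝ) (_ : LagAdm Φ (Tlam T lam) Xbar X D),
    lagEnergy Φ T lam X D


/-!
Lower bound. At every time the multiplicities are at most `Φ`, so the congestion term costs at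
least `1` per unit time. The particle that starts at `0` and ends at `x` at time `T_λ` has kinetic
energy at least `x² / T_λ` by Cauchy–Schwarz, and `∫ x² / T_λ dx = Φ³ / (12 T_λ)`, while
`λΦ³ / (1 + λT) = Φ³ / T_λ`.

Upper bound: dyadic branching. All particles of `[a, b)` wait at the midpoint; during the first two
thirds of the remaining waiting time `T` the two halves travel to the midpoints of `[a, m)` and
`[m, b)`, and the construction recurses on each half with waiting time `T / 3`. At time `t` the
congestion term is the number of clusters, so the congestion `c(T)` obeys
`c(T) ≤ 2 · 2T/3 + 2 c(T/3)`, whose fixed point is `4T`; the kinetic cost `κ Φ³ / T` obeys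
`κ = 3/32 + 3κ/4`, whose fixed point is `3/8`. After `K` levels the clusters have width `Φ / 2^K`
and spread linearly during the last `1/λ` at cost `λΦ³ / (4 · 4^K)`; taking `4^K ≥ λT` (or no
branching at all if `λT ≤ 1`) gives the bound.
-/

namespace BranchedTransport

lemma one_le_setLIntegral_inv_measure_fiber {α β : Type*} [MeasurableSpace α] (μ : Measure α)
    {s : Set α} (hs₀ : μ s ≠ 0) (hs : μ s ≠ ∞) (f : α → β) :
    1 ≤ ∫⁻ x in s, (μ {y | y ∈ s ∧ f y = f x})⁻¹ ∂μ :=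
  calc 1 = ∫⁻ _ in s, (μ s)⁻¹ ∂μ := by rw [setLIntegral_const, ENNReal.inv_mul_cancel hs₀ hs]
    _ ≤ _ := lintegral_mono fun x => ENNReal.inv_le_inv' (measure_mono fun _ hy => hy.1)

lemma ofReal_le_congestion {Φ : ℝ} (hΦ : 0 < Φ) (T : ℝ) (X : ℝ → ℝ → ℝ) :
    ENNReal.ofReal T ≤
      ∫⁻ t in Ioo (0:ℝ) T, ∫⁻ x in Icc (-(Φ/2)) (Φ/2), (mult Φ X (X t x) t)⁻¹ :=
  calc ENNReal.ofReal T = ∫⁻ _ in Ioo (0:ℝ) T, 1 := by simp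
    _ ≤ _ := lintegral_mono fun t => one_le_setLIntegral_inv_measure_fiber volume
        (s := Icc (-(Φ/2)) (Φ/2)) (by simp; linarith) (by simp) (X t)

lemma ofReal_sq_intervalIntegral_le {f : ℝ → ℝ} {a b : ℝ} (hab : a ≤ b)
    (hf : IntegrableOn f (Ioc a b)) :
    ENNReal.ofReal ((∫ t in a..b, f t) ^ 2) ≤
      ENNReal.ofReal (b - a) * ∫⁻ t in Ioc a b, ENNReal.ofReal (f t ^ 2) := by
  set A := ∫⁻ t in Ioc a b, ENNReal.ofReal (f t ^ 2)
  have h_abs : ENNReal.ofReal |∫ t in a..b, f t| ≤ ∫⁻ t in Ioc a b, ENNReal.ofReal |f t| := by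
    simpa only [intervalIntegral.integral_of_le hab, Real.enorm_eq_ofReal_abs]
      using enorm_integral_le_lintegral_enorm (μ := volume.restrict (Ioc a b)) f
  have h_holder : ∫⁻ t in Ioc a b, ENNReal.ofReal |f t| ≤
      A ^ (1 / 2 : ℝ) * ENNReal.ofReal (b - a) ^ (1 / 2 : ℝ) := by
    have := ENNReal.lintegral_mul_norm_pow_le (μ := volume.restrict (Ioc a b))
      (f := fun t => ENNReal.ofReal (f t ^ 2)) (g := fun _ => 1)
      (hf.aestronglyMeasurable.aemeasurable.pow_const 2).ennreal_ofReal aemeasurable_const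
      (p := 1 / 2) (q := 1 / 2) (by norm_num) (by norm_num) (by norm_num)
    have h_sqrt (t : ℝ) : ENNReal.ofReal (f t ^ 2) ^ (1 / 2 : ℝ) = ENNReal.ofReal |f t| := by
      rw [ENNReal.ofReal_rpow_of_nonneg (sq_nonneg _) (by norm_num), ← Real.sqrt_eq_rpow,
        Real.sqrt_sq_eq_abs]
    simpa only [h_sqrt, ENNReal.one_rpow, mul_one, setLIntegral_const, one_mul, Real.volume_Ioc]
      using this
  calc ENNReal.ofReal ((∫ t in a..b, f t) ^ 2) = ENNReal.ofReal |∫ t in a..b, f t| ^ 2 := by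
        rw [← ENNReal.ofReal_pow (abs_nonneg _), sq_abs]
    _ ≤ (A ^ (1 / 2 : ℝ) * ENNReal.ofReal (b - a) ^ (1 / 2 : ℝ)) ^ 2 := by
        gcongr; exact h_abs.trans h_holder
    _ = _ := by
        rw [mul_pow, ← ENNReal.rpow_natCast, ← ENNReal.rpow_natCast, ← ENNReal.rpow_mul,
          ← ENNReal.rpow_mul]
        norm_num [mul_comm]

lemma lintegral_Icc_sq_div {Φ L : ℝ} (hΦ : 0 ≤ Φ) (hL : 0 ≤ L) :
    ∫⁻ x in Icc (-(Φ/2)) (Φ/2), ENNReal.ofReal (x ^ 2 / L) =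
      ENNReal.ofReal (Φ ^ 3 / (12 * L)) := by
  have h_int : IntegrableOn (fun x : ℝ => x ^ 2 / L) (Icc (-(Φ/2)) (Φ/2)) :=
    (by fun_prop : Continuous fun x : ℝ => x ^ 2 / L).integrableOn_Icc
  rw [← ofReal_integral_eq_lintegral_ofReal h_int (ae_of_all _ fun x => ?_),
    integral_Icc_eq_integral_Ioc, ← intervalIntegral.integral_of_le (by linarith),
    intervalIntegral.integral_div, integral_pow]
  · congr 1; ring
  · positivity

lemma ofReal_le_kinetic {Φ Tl : ℝ} (hΦ : 0 < Φ) (hTl : 0 < Tl) {X D : ℝ → ℝ → ℝ}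
    (h : LagAdm Φ Tl 0 X D) :
    ENNReal.ofReal (Φ ^ 3 / (12 * Tl)) ≤
      ∫⁻ t in Ioo (0:ℝ) Tl, ∫⁻ x in Icc (-(Φ/2)) (Φ/2), ENNReal.ofReal (D t x ^ 2) := by
  rw [lintegral_lintegral_swap ((h.measD.pow_const 2).ennreal_ofReal.aemeasurable),
    ← lintegral_Icc_sq_div hΦ.le hTl.le]
  refine lintegral_mono_ae ?_
  filter_upwards [h.curves] with x hx
  obtain ⟨-, hx_end, hx_int, hx_eq⟩ := hx
  have hx_total : x = ∫ s in (0:ℝ)..Tl, D s x := by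
    simpa [hx_end] using hx_eq Tl ⟨hTl.le, le_rfl⟩
  rw [Measure.restrict_congr_set Ioo_ae_eq_Ioc, ENNReal.ofReal_div_of_pos hTl]
  refine ENNReal.div_le_of_le_mul' ?_
  simpa [← hx_total] using
    ofReal_sq_intervalIntegral_le hTl.le (hx_int.mono_set Ioc_subset_Icc_self)

theorem ofReal_le_lagE {Φ T lam : ℝ} (hΦ : 0 < Φ) (hT : 0 < T) (hlam : 0 < lam) :
    ENNReal.ofReal (1 / 12 * (T + lam * Φ ^ 3 / (1 + lam * T))) ≤ lagE Φ T lam 0 := by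
  have hTl : 0 < Tlam T lam := by unfold Tlam; positivity
  have h_eq : lam * Φ ^ 3 / (1 + lam * T) = Φ ^ 3 / Tlam T lam := by
    unfold Tlam; field_simp; ring
  refine le_iInf fun X => le_iInf fun D => le_iInf fun h => ?_
  calc _ ≤ ENNReal.ofReal T + ENNReal.ofReal (Φ ^ 3 / (12 * Tlam T lam)) := by
        rw [← ENNReal.ofReal_add hT.le (by positivity), h_eq]
        have : 0 ≤ Φ ^ 3 / Tlam T lam := by positivity
        refine ENNReal.ofReal_le_ofReal ?_
        rw [mul_add, div_mul_eq_div_div_swap]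
        linarith
    _ ≤ lagEnergy Φ T lam X D :=
        add_le_add (ofReal_le_congestion hΦ T X) (ofReal_le_kinetic hΦ hTl h)

lemma setLIntegral_Ico_add {a m b : ℝ} (ham : a ≤ m) (hmb : m ≤ b) (f : ℝ → ℝ≥0∞) :
    ∫⁻ x in Ico a b, f x = (∫⁻ x in Ico a m, f x) + ∫⁻ x in Ico m b, f x := by
  rw [← Ico_union_Ico_eq_Ico ham hmb, lintegral_union measurableSet_Ico Ico_disjoint_Ico_same]

lemma setLIntegral_Ioo_add {a m b : ℝ} (ham : a ≤ m) (hmb : m < b) (f : ℝ → ℝ≥0∞) :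
    ∫⁻ t in Ioo a b, f t = (∫⁻ t in Ioo a m, f t) + ∫⁻ t in Ioo m b, f t := by
  rw [← Ioc_union_Ioo_eq_Ioo ham hmb, lintegral_union measurableSet_Ioo
    (Set.disjoint_left.2 fun _ h h' => not_lt.2 h.2 h'.1),
    Measure.restrict_congr_set Ioo_ae_eq_Ioc.symm]

lemma setLIntegral_le_of_le {α : Type*} [MeasurableSpace α] {μ : Measure α} {s : Set α}
    {f : α → ℝ≥0∞} {c : ℝ≥0∞} (h : ∀ t ∈ s, f t ≤ c) :
    ∫⁻ t in s, f t ∂μ ≤ c * μ s :=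
  (setLIntegral_mono measurable_const h).trans_eq (setLIntegral_const s c)

def IsTrajectory (Y v : ℝ → ℝ) (y t₀ t₁ : ℝ) : Prop :=
  IntegrableOn v (Icc t₀ t₁) ∧ ∀ t ∈ Icc t₀ t₁, Y t = y + ∫ s in t₀..t, v s

lemma isTrajectory_const_velocity (y v t₀ t₁ : ℝ) :
    IsTrajectory (fun t => y + (t - t₀) * v) (fun _ => v) y t₀ t₁ :=
  ⟨integrableOn_const measure_Icc_lt_top.ne, fun t _ => by simp⟩

lemma IsTrajectory.piecewise {Y₀ Y₁ v₀ v₁ : ℝ → ℝ} {y t₀ t₁ t₂ : ℝ}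
    (h₀ : IsTrajectory Y₀ v₀ y t₀ t₁) (h₁ : IsTrajectory Y₁ v₁ (Y₀ t₁) t₁ t₂) (h01 : t₀ ≤ t₁) :
    IsTrajectory (fun t => if t ≤ t₁ then Y₀ t else Y₁ t) (fun t => if t ≤ t₁ then v₀ t else v₁ t)
      y t₀ t₂ := by
  set v := fun t => if t ≤ t₁ then v₀ t else v₁ t
  have hv₀ : IntegrableOn v (Icc t₀ t₁) :=
    h₀.1.congr_fun (fun t ht => (if_pos ht.2).symm) measurableSet_Icc
  have hv₁ : IntegrableOn v (Ioc t₁ t₂) :=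
    (h₁.1.mono_set Ioc_subset_Icc_self).congr_fun (fun t ht => (if_neg (not_le.2 ht.1)).symm)
      measurableSet_Ioc
  have hv : IntegrableOn v (Icc t₀ t₂) :=
    (hv₀.union ((integrableOn_Icc_iff_integrableOn_Ioc).2 hv₁)).mono_set
      (Icc_subset_Icc_union_Icc)
  have h_int₀ : ∀ t ∈ Icc t₀ t₁, ∫ s in t₀..t, v s = ∫ s in t₀..t, v₀ s := fun t ht =>
    intervalIntegral.integral_congr fun s hs => if_pos ((uIcc_of_le ht.1 ▸ hs).2.trans ht.2)
  refine ⟨hv, fun t ht => ?_⟩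
  by_cases htt : t ≤ t₁
  · simp only [if_pos htt, h_int₀ t ⟨ht.1, htt⟩]
    exact h₀.2 t ⟨ht.1, htt⟩
  · push Not at htt
    have h_int₁ : ∫ s in t₁..t, v s = ∫ s in t₁..t, v₁ s := by
      simp only [intervalIntegral.integral_of_le htt.le]
      exact setIntegral_congr_fun measurableSet_Ioc fun s hs => if_neg (not_le.2 hs.1)
    have hv_sub : ∀ {c d}, t₀ ≤ c → c ≤ d → d ≤ t₂ → IntervalIntegrable v volume c d :=
      fun hc hcd hd =>
        (hv.mono_set (by rw [uIcc_of_le hcd]; exact Icc_subset_Icc hc hd)).intervalIntegrable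
    simp only [if_neg (not_le.2 htt)]
    rw [← intervalIntegral.integral_add_adjacent_intervals
      (hv_sub le_rfl h01 (htt.le.trans ht.2)) (hv_sub h01 htt.le ht.2), h_int₀ t₁ ⟨h01, le_rfl⟩,
      h_int₁, h₁.2 t ⟨htt.le, ht.2⟩, h₀.2 t₁ ⟨h01, le_rfl⟩, add_assoc]

structure IsSpreading (a b y t₀ t₁ : ℝ) (X D : ℝ → ℝ → ℝ) : Prop where
  measurable_X : Measurable (Function.uncurry X)
  measurable_D : Measurable (Function.uncurry D)
  isTrajectory : ∀ x ∈ Ico a b, IsTrajectory (X · x) (D · x) y t₀ t₁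
  apply_end : ∀ x ∈ Ico a b, X t₁ x = x

def concatTime (t₁ : ℝ) (X₀ X₁ : ℝ → ℝ → ℝ) : ℝ → ℝ → ℝ :=
  fun t x => if t ≤ t₁ then X₀ t x else X₁ t x

def concatSpace (m : ℝ) (X₀ X₁ : ℝ → ℝ → ℝ) : ℝ → ℝ → ℝ :=
  fun t x => if x < m then X₀ t x else X₁ t x

lemma concatTime_of_le {t₁ t : ℝ} (X₀ X₁ : ℝ → ℝ → ℝ) (ht : t ≤ t₁) :
    concatTime t₁ X₀ X₁ t = X₀ t :=
  funext fun _ => if_pos ht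

lemma concatTime_of_lt {t₁ t : ℝ} (X₀ X₁ : ℝ → ℝ → ℝ) (ht : t₁ < t) :
    concatTime t₁ X₀ X₁ t = X₁ t :=
  funext fun _ => if_neg (not_le.2 ht)

lemma measurable_concatTime {t₁ : ℝ} {X₀ X₁ : ℝ → ℝ → ℝ} (h₀ : Measurable (Function.uncurry X₀))
    (h₁ : Measurable (Function.uncurry X₁)) :
    Measurable (Function.uncurry (concatTime t₁ X₀ X₁)) :=
  Measurable.ite (measurableSet_le measurable_fst measurable_const) h₀ h₁

lemma measurable_concatSpace {m : ℝ} {X₀ X₁ : ℝ → ℝ → ℝ} (h₀ : Measurable (Function.uncurry X₀))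
    (h₁ : Measurable (Function.uncurry X₁)) :
    Measurable (Function.uncurry (concatSpace m X₀ X₁)) :=
  Measurable.ite (measurableSet_lt measurable_snd measurable_const) h₀ h₁

lemma isSpreading_linear (a b y : ℝ) {t₀ t₁ : ℝ} (h : t₀ < t₁) :
    IsSpreading a b y t₀ t₁ (fun t x => y + (t - t₀) * ((x - y) / (t₁ - t₀)))
      (fun _ x => (x - y) / (t₁ - t₀)) where
  measurable_X := by fun_prop
  measurable_D := by fun_prop
  isTrajectory x _ := isTrajectory_const_velocity y _ t₀ t₁
  apply_end x _ := by field_simp [(sub_pos.2 h).ne']; ring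

lemma IsSpreading.concatTime_const {a b y y' v t₀ t₁ t₂ : ℝ} {X D : ℝ → ℝ → ℝ}
    (h : IsSpreading a b y' t₁ t₂ X D) (hy : y + (t₁ - t₀) * v = y') (h01 : t₀ ≤ t₁)
    (h12 : t₁ < t₂) :
    IsSpreading a b y t₀ t₂ (concatTime t₁ (fun t _ => y + (t - t₀) * v) X)
      (concatTime t₁ (fun _ _ => v) D) where
  measurable_X := measurable_concatTime (by fun_prop) h.measurable_X
  measurable_D := measurable_concatTime measurable_const h.measurable_D
  isTrajectory x hx := (isTrajectory_const_velocity y v t₀ t₁).piecewise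
    (hy ▸ h.isTrajectory x hx) h01
  apply_end x hx := by simpa [concatTime, not_le.2 h12] using h.apply_end x hx

lemma IsSpreading.concatSpace {a m b y t₀ t₁ : ℝ} {X₀ X₁ D₀ D₁ : ℝ → ℝ → ℝ}
    (h₀ : IsSpreading a m y t₀ t₁ X₀ D₀) (h₁ : IsSpreading m b y t₀ t₁ X₁ D₁) :
    IsSpreading a b y t₀ t₁ (concatSpace m X₀ X₁) (concatSpace m D₀ D₁) where
  measurable_X := measurable_concatSpace h₀.measurable_X h₁.measurable_X
  measurable_D := measurable_concatSpace h₀.measurable_D h₁.measurable_D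
  isTrajectory x hx := by
    by_cases hxm : x < m
    · simpa [BranchedTransport.concatSpace, hxm] using h₀.isTrajectory x ⟨hx.1, hxm⟩
    · simpa [BranchedTransport.concatSpace, hxm] using h₁.isTrajectory x ⟨not_lt.1 hxm, hx.2⟩
  apply_end x hx := by
    by_cases hxm : x < m
    · simpa [BranchedTransport.concatSpace, hxm] using h₀.apply_end x ⟨hx.1, hxm⟩
    · simpa [BranchedTransport.concatSpace, hxm] using h₁.apply_end x ⟨not_lt.1 hxm, hx.2⟩

lemma IsSpreading.lagAdm {Φ Tl : ℝ} {X D : ℝ → ℝ → ℝ}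
    (h : IsSpreading (-(Φ/2)) (Φ/2) 0 0 Tl X D) (hTl : 0 ≤ Tl) : LagAdm Φ Tl 0 X D where
  measX := h.measurable_X
  measD := h.measurable_D
  curves := by
    rw [Measure.restrict_congr_set Ico_ae_eq_Icc.symm, ae_restrict_iff' measurableSet_Ico]
    refine ae_of_all _ fun x hx => ?_
    obtain ⟨h_int, h_eq⟩ := h.isTrajectory x hx
    exact ⟨by simpa using h_eq 0 ⟨le_rfl, hTl⟩, h.apply_end x hx, h_int, h_eq⟩

/-- The inner integral `∫ 1 / φ_X(X(t,x),t) dx` of the energy at a time slice `u = X t`, for the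
particles of `[a, b)` alone. Half-open intervals split disjointly at their midpoint. -/
def congestion (a b : ℝ) (u : ℝ → ℝ) : ℝ≥0∞ :=
  ∫⁻ x in Ico a b, (volume {x' | x' ∈ Ico a b ∧ u x' = u x})⁻¹

def kinetic (a b : ℝ) (w : ℝ → ℝ) : ℝ≥0∞ :=
  ∫⁻ x in Ico a b, ENNReal.ofReal (w x ^ 2)

lemma congestion_const_le_one (a b c : ℝ) : congestion a b (fun _ => c) ≤ 1 := by
  simpa only [congestion, and_true, ofPred_mem_eq, setLIntegral_const] using
    ENNReal.inv_mul_le_one _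

lemma congestion_concatSpace_le {a m b t : ℝ} (ham : a ≤ m) (hmb : m ≤ b) (X₀ X₁ : ℝ → ℝ → ℝ) :
    congestion a b (concatSpace m X₀ X₁ t) ≤ congestion a m (X₀ t) + congestion m b (X₁ t) := by
  rw [congestion, setLIntegral_Ico_add ham hmb]
  refine add_le_add (setLIntegral_mono' measurableSet_Ico fun x hx => ?_)
    (setLIntegral_mono' measurableSet_Ico fun x hx => ?_) <;>
  refine ENNReal.inv_le_inv' (measure_mono fun x' hx' => ⟨?_, ?_⟩)
  · exact ⟨hx'.1.1, hx'.1.2.trans_le hmb⟩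
  · simpa [concatSpace, hx.2, hx'.1.2] using hx'.2
  · exact ⟨ham.trans hx'.1.1, hx'.1.2⟩
  · simpa [concatSpace, not_lt.2 hx.1, not_lt.2 hx'.1.1] using hx'.2

lemma kinetic_concatSpace {a m b t : ℝ} (ham : a ≤ m) (hmb : m ≤ b) (D₀ D₁ : ℝ → ℝ → ℝ) :
    kinetic a b (concatSpace m D₀ D₁ t) = kinetic a m (D₀ t) + kinetic m b (D₁ t) := by
  rw [kinetic, setLIntegral_Ico_add ham hmb]
  congr 1 <;> refine setLIntegral_congr_fun measurableSet_Ico fun x hx => ?_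
  · simp [concatSpace, hx.2]
  · simp [concatSpace, (not_lt.2 hx.1 : ¬ x < m)]

lemma kinetic_const (a b v : ℝ) :
    kinetic a b (fun _ => v) = ENNReal.ofReal (v ^ 2 * (b - a)) := by
  rw [kinetic, setLIntegral_const, Real.volume_Ico, ENNReal.ofReal_mul (sq_nonneg v)]

lemma kinetic_le_of_abs_le {a b c : ℝ} {w : ℝ → ℝ} (h : ∀ x ∈ Ico a b, |w x| ≤ c) :
    kinetic a b w ≤ ENNReal.ofReal (c ^ 2 * (b - a)) :=
  calc kinetic a b w ≤ kinetic a b (fun _ => c) :=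
        setLIntegral_mono' measurableSet_Ico fun x hx => ENNReal.ofReal_le_ofReal <|
          sq_abs (w x) ▸ pow_le_pow_left₀ (abs_nonneg _) (h x hx) 2
    _ = _ := kinetic_const a b c

lemma measurable_congestion (a b : ℝ) {X : ℝ → ℝ → ℝ} (hX : Measurable (Function.uncurry X)) :
    Measurable fun t => congestion a b (X t) := by
  have h_fiber : MeasurableSet {q : (ℝ × ℝ) × ℝ | q.2 ∈ Ico a b ∧ X q.1.1 q.2 = q.1.2} :=
    (measurable_snd measurableSet_Ico).inter <| measurableSet_eq_fun
      (hX.comp (measurable_fst.fst.prodMk measurable_snd)) measurable_fst.snd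
  have h_mult :
      Measurable fun p : ℝ × ℝ => volume {x' | x' ∈ Ico a b ∧ X p.1 x' = X p.1 p.2} :=
    (measurable_measure_prodMk_left h_fiber).comp (measurable_fst.prodMk hX)
  exact Measurable.lintegral_prod_right h_mult.inv

lemma measurable_kinetic (a b : ℝ) {D : ℝ → ℝ → ℝ} (hD : Measurable (Function.uncurry D)) :
    Measurable fun t => kinetic a b (D t) :=
  Measurable.lintegral_prod_right (f := fun t x => ENNReal.ofReal (D t x ^ 2))
    (hD.pow_const 2).ennreal_ofReal

theorem exists_isSpreading_direct {lam : ℝ} (hlam : 0 < lam) (a b : ℝ) {t₀ s : ℝ}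
    (hs : t₀ ≤ s) :
    ∃ X D, IsSpreading a b ((a + b) / 2) t₀ (s + 1 / lam) X D ∧
      ∫⁻ t in Ioo t₀ s, congestion a b (X t) ≤ ENNReal.ofReal (s - t₀) ∧
      ∫⁻ t in Ioo t₀ (s + 1 / lam), kinetic a b (D t) ≤
        ENNReal.ofReal (lam * (b - a) ^ 3 / 4) := by
  set y := (a + b) / 2 with hy
  have h_end : s < s + 1 / lam := by simp [hlam]
  refine ⟨_, _, (isSpreading_linear a b y h_end).concatTime_const (v := 0) (t₀ := t₀) (by ring)
    hs h_end, ?_, ?_⟩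
  · calc _ ≤ 1 * volume (Ioo t₀ s) := setLIntegral_le_of_le fun t ht => by
          rw [concatTime_of_le _ _ ht.2.le]; exact congestion_const_le_one a b _
      _ = _ := by simp
  · rw [setLIntegral_Ioo_add hs h_end]
    calc _ ≤ 0 * volume (Ioo t₀ s) + ENNReal.ofReal ((lam * (b - a) / 2) ^ 2 * (b - a)) *
          volume (Ioo s (s + 1 / lam)) := by
          refine add_le_add (setLIntegral_le_of_le fun t ht => ?_)
            (setLIntegral_le_of_le fun t ht => ?_)
          · simp [concatTime_of_le _ _ ht.2.le, kinetic_const]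
          · rw [concatTime_of_lt _ _ ht.1]
            refine kinetic_le_of_abs_le fun x hx => ?_
            rw [add_sub_cancel_left, div_div_eq_mul_div, div_one, abs_mul, abs_of_pos hlam]
            have : |x - y| ≤ (b - a) / 2 :=
              abs_le.2 ⟨by linarith [hx.1, hx.2], by linarith [hx.1, hx.2]⟩
            nlinarith
      _ = ENNReal.ofReal (lam * (b - a) ^ 3 / 4) := by
          rw [Real.volume_Ioo, Real.volume_Ioo, add_sub_cancel_left, zero_mul, zero_add,
            ← ENNReal.ofReal_mul' (by positivity)]
          congr 1
          field_simp
          ring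

lemma setLIntegral_congestion_concat_le {a m b t₀ t₁ s : ℝ} (ham : a ≤ m) (hmb : m ≤ b)
    (h01 : t₀ ≤ t₁) (h1s : t₁ < s) (f₀ f₁ : ℝ → ℝ) {X₀ X₁ : ℝ → ℝ → ℝ}
    (hX₀ : Measurable (Function.uncurry X₀)) :
    ∫⁻ t in Ioo t₀ s, congestion a b (concatSpace m (concatTime t₁ (fun t _ => f₀ t) X₀)
        (concatTime t₁ (fun t _ => f₁ t) X₁) t) ≤
      ENNReal.ofReal (2 * (t₁ - t₀)) + ((∫⁻ t in Ioo t₁ s, congestion a m (X₀ t)) +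
        ∫⁻ t in Ioo t₁ s, congestion m b (X₁ t)) := by
  rw [setLIntegral_Ioo_add h01 h1s]
  refine add_le_add ?_ ?_
  · calc _ ≤ 2 * volume (Ioo t₀ t₁) := setLIntegral_le_of_le fun t ht => by
          refine (congestion_concatSpace_le ham hmb _ _).trans ?_
          rw [concatTime_of_le _ _ ht.2.le, concatTime_of_le _ _ ht.2.le, ← one_add_one_eq_two]
          exact add_le_add (congestion_const_le_one _ _ _) (congestion_const_le_one _ _ _)
      _ = _ := by rw [Real.volume_Ioo, ENNReal.ofReal_mul zero_le_two, ENNReal.ofReal_ofNat]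
  · rw [← lintegral_add_left (measurable_congestion a m hX₀)]
    refine setLIntegral_mono' measurableSet_Ioo fun t ht => ?_
    refine (congestion_concatSpace_le ham hmb _ _).trans_eq ?_
    rw [concatTime_of_lt _ _ ht.1, concatTime_of_lt _ _ ht.1]

lemma setLIntegral_kinetic_concat_le {a m b t₀ t₁ s : ℝ} (ham : a ≤ m) (hmb : m ≤ b)
    (h01 : t₀ ≤ t₁) (h1s : t₁ < s) (v₀ v₁ : ℝ) {D₀ D₁ : ℝ → ℝ → ℝ}
    (hD₀ : Measurable (Function.uncurry D₀)) :
    ∫⁻ t in Ioo t₀ s, kinetic a b (concatSpace m (concatTime t₁ (fun _ _ => v₀) D₀)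
        (concatTime t₁ (fun _ _ => v₁) D₁) t) ≤
      ENNReal.ofReal ((v₀ ^ 2 * (m - a) + v₁ ^ 2 * (b - m)) * (t₁ - t₀)) +
        ((∫⁻ t in Ioo t₁ s, kinetic a m (D₀ t)) + ∫⁻ t in Ioo t₁ s, kinetic m b (D₁ t)) := by
  rw [setLIntegral_Ioo_add h01 h1s]
  refine add_le_add ?_ ?_
  · calc _ ≤ ENNReal.ofReal (v₀ ^ 2 * (m - a) + v₁ ^ 2 * (b - m)) * volume (Ioo t₀ t₁) :=
          setLIntegral_le_of_le fun t ht => by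
            rw [kinetic_concatSpace ham hmb, concatTime_of_le _ _ ht.2.le,
              concatTime_of_le _ _ ht.2.le, kinetic_const, kinetic_const,
              ← ENNReal.ofReal_add (by nlinarith) (by nlinarith)]
      _ = _ := by rw [Real.volume_Ioo, ← ENNReal.ofReal_mul (by nlinarith)]
  · rw [← lintegral_add_left (measurable_kinetic a m hD₀)]
    refine setLIntegral_mono' measurableSet_Ioo fun t ht => ?_
    rw [kinetic_concatSpace ham hmb, concatTime_of_lt _ _ ht.1, concatTime_of_lt _ _ ht.1]

theorem exists_isSpreading_dyadic {lam : ℝ} (hlam : 0 < lam) (K : ℕ) {a b t₀ s : ℝ}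
    (hab : a ≤ b) (hs : t₀ < s) :
    ∃ X D, IsSpreading a b ((a + b) / 2) t₀ (s + 1 / lam) X D ∧
      ∫⁻ t in Ioo t₀ s, congestion a b (X t) ≤ ENNReal.ofReal (4 * (s - t₀)) ∧
      ∫⁻ t in Ioo t₀ (s + 1 / lam), kinetic a b (D t) ≤
        ENNReal.ofReal (3 * (b - a) ^ 3 / (8 * (s - t₀)) + lam * (b - a) ^ 3 / (4 * 4 ^ K)) := by
  induction K generalizing a b t₀ with
  | zero =>
    obtain ⟨X, D, h, h_cong, h_kin⟩ := exists_isSpreading_direct hlam a b hs.le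
    refine ⟨X, D, h, h_cong.trans (ENNReal.ofReal_le_ofReal (by linarith)),
      h_kin.trans (ENNReal.ofReal_le_ofReal ?_)⟩
    have : 0 ≤ 3 * (b - a) ^ 3 / (8 * (s - t₀)) := by
      have := sub_nonneg.2 hab; have := sub_pos.2 hs; positivity
    simp only [pow_zero, mul_one]
    linarith
  | succ K ih =>
    set m := (a + b) / 2 with hm
    set T := s - t₀ with hT
    set t₁ := t₀ + 2 * T / 3 with ht₁
    -- each half travels `(b - a) / 4` during `[t₀, t₁]`
    set v := 3 * (b - a) / (8 * T) with hv
    have hT_pos : 0 < T := sub_pos.2 hs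
    have h01 : t₀ ≤ t₁ := by linarith
    have h1s : t₁ < s := by linarith
    have h1e : t₁ < s + 1 / lam := h1s.trans (by simp [hlam])
    obtain ⟨X₀, D₀, h₀, h_cong₀, h_kin₀⟩ := ih (a := a) (b := m) (by linarith) h1s
    obtain ⟨X₁, D₁, h₁, h_cong₁, h_kin₁⟩ := ih (a := m) (b := b) (by linarith) h1s
    refine ⟨_, _, (h₀.concatTime_const (y := m) (v := -v) ?_ h01 h1e).concatSpace
      (h₁.concatTime_const (y := m) (v := v) ?_ h01 h1e), ?_, ?_⟩
    · rw [hm, ht₁, hv]; field_simp; ring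
    · rw [hm, ht₁, hv]; field_simp; ring
    · refine (setLIntegral_congestion_concat_le (by linarith) (by linarith) h01 h1s _ _
        h₀.measurable_X).trans ?_
      calc _ ≤ ENNReal.ofReal (2 * (t₁ - t₀)) +
            (ENNReal.ofReal (4 * (s - t₁)) + ENNReal.ofReal (4 * (s - t₁))) := by gcongr
        _ = _ := by
          rw [← ENNReal.ofReal_add (by linarith) (by linarith),
            ← ENNReal.ofReal_add (by linarith) (by linarith)]
          congr 1; ring
    · refine (setLIntegral_kinetic_concat_le (by linarith) (by linarith) h01 h1e _ _
        h₀.measurable_D).trans ?_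
      have h_ma : m - a = (b - a) / 2 := by rw [hm]; ring
      have h_bm : b - m = (b - a) / 2 := by rw [hm]; ring
      have h_01 : t₁ - t₀ = 2 * T / 3 := by rw [ht₁]; ring
      have h_1s : s - t₁ = T / 3 := by rw [ht₁, hT]; ring
      rw [h_ma, h_1s] at h_kin₀
      rw [h_bm, h_1s] at h_kin₁
      rw [h_ma, h_bm, h_01]
      have h_half : 0 ≤ 3 * ((b - a) / 2) ^ 3 / (8 * (T / 3)) +
          lam * ((b - a) / 2) ^ 3 / (4 * 4 ^ K) := by
        have := sub_nonneg.2 hab; positivity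
      calc _ ≤ ENNReal.ofReal (((-v) ^ 2 * ((b - a) / 2) + v ^ 2 * ((b - a) / 2)) *
              (2 * T / 3)) +
            (ENNReal.ofReal (3 * ((b - a) / 2) ^ 3 / (8 * (T / 3)) +
              lam * ((b - a) / 2) ^ 3 / (4 * 4 ^ K)) +
             ENNReal.ofReal (3 * ((b - a) / 2) ^ 3 / (8 * (T / 3)) +
              lam * ((b - a) / 2) ^ 3 / (4 * 4 ^ K))) := by gcongr
        _ = _ := by
          have := sub_nonneg.2 hab
          rw [← ENNReal.ofReal_add h_half h_half,
            ← ENNReal.ofReal_add (by positivity) (by positivity)]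
          congr 1
          rw [hv, pow_succ]
          field_simp
          ring

lemma lagE_le_of_isSpreading {Φ T lam : ℝ} {X D : ℝ → ℝ → ℝ}
    (h : IsSpreading (-(Φ/2)) (Φ/2) 0 0 (Tlam T lam) X D) (hTl : 0 ≤ Tlam T lam) :
    lagE Φ T lam 0 ≤ (∫⁻ t in Ioo 0 T, congestion (-(Φ/2)) (Φ/2) (X t)) +
      ∫⁻ t in Ioo 0 (Tlam T lam), kinetic (-(Φ/2)) (Φ/2) (D t) := by
  refine iInf_le_of_le X <| iInf_le_of_le D <| iInf_le_of_le (h.lagAdm hTl) <|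
    add_le_add (lintegral_mono fun t => ?_) (lintegral_mono fun t => ?_) <;>
  rw [Measure.restrict_congr_set Ico_ae_eq_Icc.symm]
  · exact setLIntegral_mono' measurableSet_Ico fun x _ => ENNReal.inv_le_inv' <|
    measure_mono fun x' hx' => ⟨Ico_subset_Icc_self hx'.1, hx'.2⟩
  · rfl

lemma direct_bound_le {Φ T lam : ℝ} (hΦ : 0 < Φ) (hT : 0 < T) (hlam : 0 < lam)
    (h : lam * T ≤ 1) :
    T + lam * Φ ^ 3 / 4 ≤ 4 * (T + lam * Φ ^ 3 / (1 + lam * T)) := by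
  have : lam * Φ ^ 3 / 4 ≤ lam * Φ ^ 3 / (1 + lam * T) :=
    div_le_div_of_nonneg_left (by positivity) (by positivity) (by linarith)
  have : 0 ≤ lam * Φ ^ 3 / (1 + lam * T) := by positivity
  linarith

lemma dyadic_bound_le {Φ T lam : ℝ} (hΦ : 0 < Φ) (hT : 0 < T) (hlam : 0 < lam) {K : ℕ}
    (h₁ : 1 ≤ lam * T) (hK : lam * T ≤ 4 ^ K) :
    4 * T + (3 * Φ ^ 3 / (8 * T) + lam * Φ ^ 3 / (4 * 4 ^ K)) ≤
      4 * (T + lam * Φ ^ 3 / (1 + lam * T)) := by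
  have h_tail : lam * Φ ^ 3 / (4 * 4 ^ K) ≤ Φ ^ 3 / (4 * T) := by
    rw [div_le_div_iff₀ (by positivity) (by positivity)]
    nlinarith [pow_pos hΦ 3]
  have h_main : 5 * Φ ^ 3 / (8 * T) ≤ 4 * (lam * Φ ^ 3 / (1 + lam * T)) := by
    rw [mul_div_assoc', div_le_div_iff₀ (by positivity) (by positivity)]
    nlinarith [pow_pos hΦ 3]
  have : 3 * Φ ^ 3 / (8 * T) + Φ ^ 3 / (4 * T) = 5 * Φ ^ 3 / (8 * T) := by
    field_simp; ring
  linarith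

theorem lagE_le {Φ T lam : ℝ} (hΦ : 0 < Φ) (hT : 0 < T) (hlam : 0 < lam) :
    lagE Φ T lam 0 ≤ ENNReal.ofReal (4 * (T + lam * Φ ^ 3 / (1 + lam * T))) := by
  have hTl : 0 ≤ Tlam T lam := by unfold Tlam; positivity
  have h_center : (-(Φ/2) + Φ/2) / 2 = 0 := by ring
  have h_width : Φ/2 - -(Φ/2) = Φ := by ring
  rcases le_or_gt (lam * T) 1 with h | h
  · obtain ⟨X, D, hXD, h_cong, h_kin⟩ := exists_isSpreading_direct hlam (-(Φ/2)) (Φ/2) hT.le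
    rw [h_center] at hXD
    rw [sub_zero] at h_cong
    rw [h_width] at h_kin
    calc _ ≤ _ := lagE_le_of_isSpreading hXD hTl
      _ ≤ ENNReal.ofReal T + ENNReal.ofReal (lam * Φ ^ 3 / 4) := add_le_add h_cong h_kin
      _ ≤ _ := by
        rw [← ENNReal.ofReal_add hT.le (by positivity)]
        exact ENNReal.ofReal_le_ofReal (direct_bound_le hΦ hT hlam h)
  · obtain ⟨K, hK⟩ := pow_unbounded_of_one_lt (lam * T) (by norm_num : (1:ℝ) < 4)
    obtain ⟨X, D, hXD, h_cong, h_kin⟩ :=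
      exists_isSpreading_dyadic hlam K (a := -(Φ/2)) (b := Φ/2) (by linarith) hT
    rw [h_center] at hXD
    rw [sub_zero] at h_cong
    rw [h_width, sub_zero] at h_kin
    calc _ ≤ _ := lagE_le_of_isSpreading hXD hTl
      _ ≤ _ := add_le_add h_cong h_kin
      _ ≤ _ := by
        rw [← ENNReal.ofReal_add (by positivity) (by positivity)]
        exact ENNReal.ofReal_le_ofReal (dyadic_bound_le hΦ hT hlam h.le hK.le)

end BranchedTransport

/-- `E(Φ,T,λ) ∼ T + λΦ³/(1+λT)` with universal constants. -/
theorem statement16 :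
    ∃ c C : ℝ, 0 < c ∧ 0 < C ∧ ∀ Φ T lam : ℝ, 0 < Φ → 0 < T → 0 < lam →
      ENNReal.ofReal (c * (T + lam * Φ^3 / (1 + lam * T))) ≤ lagE Φ T lam 0 ∧
      lagE Φ T lam 0 ≤ ENNReal.ofReal (C * (T + lam * Φ^3 / (1 + lam * T))) :=
  ⟨1 / 12, 4, by norm_num, by norm_num, fun _ _ _ hΦ hT hlam =>
    ⟨BranchedTransport.ofReal_le_lagE hΦ hT hlam, BranchedTransport.lagE_le hΦ hT hlam⟩⟩
end
end

section
/- Let Φ, T, λ > 0 and let X ∈ 𝒞(Φ,T_λ,0) be a minimizer of E(Φ,T,λ). Then for every s ∈ [0,T_λ] and almost every x ∈ [-Φ/2,Φ/2], one has |X(s,x)| ≤ (s/T_λ)·(Φ/2); that is, all trajectories remain in the space-time cone spanned by the vertex (0,0) and the segment {T_λ}×[-Φ/2,Φ/2] (cone property). In particular sup_x |X(T,x)| ≤ (T/(2T_λ)) ≤ λT/(1+λT). -/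
open MeasureTheory Filter Set ENNReal

noncomputable section

/-! Clamp every trajectory to the cone `|y| ≤ c t`, `c = (Φ/2)/T_λ`. The clamped map is admissible
(the endpoint `x` already lies in the cone) and at each time is a function of `X(t,·)`, so level
sets only merge and the multiplicity term cannot increase. For a trajectory `f` with velocity `d`,
the clamped velocity `e` is `±c` on the excursion sets `{c t < ±f}`. The chain rule
`∫₀ᵗ 1_{k>0} k' = k(t)⁺` for the absolutely continuous `k = ±f - c t`, together with `k(T_λ) ≤ 0`,
makes `e - d` orthogonal to `e` in `L²`; hence `‖d‖² = ‖e‖² + ‖e - d‖²`, and the kinetic energy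
drops strictly unless the trajectory stays in the cone. Since `E(Φ,T,λ)` is finite (wait at `0`
until `T`, then move linearly), a minimizer has almost every trajectory in the cone. -/

theorem IntervalIntegrable.indicator {μ : Measure ℝ} {g : ℝ → ℝ} {a b : ℝ}
    (hg : IntervalIntegrable g μ a b) {s : Set ℝ} (hs : MeasurableSet s) :
    IntervalIntegrable (s.indicator g) μ a b :=
  intervalIntegrable_iff.mpr ((intervalIntegrable_iff.mp hg).indicator hs)

theorem setLIntegral_setLIntegral_ne_top {α β : Type*} [MeasurableSpace α] [MeasurableSpace β]
    {μ : Measure α} {ν : Measure β} {s : Set α} {u : Set β} (hs : MeasurableSet s)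
    (hu : MeasurableSet u) (hμs : μ s ≠ ⊤) (hνu : ν u ≠ ⊤) {F : α → β → ℝ≥0∞} {C : ℝ≥0∞}
    (hC : C ≠ ⊤) (hF : ∀ t ∈ s, ∀ x ∈ u, F t x ≤ C) :
    ∫⁻ t in s, ∫⁻ x in u, F t x ∂ν ∂μ ≠ ⊤ := by
  refine ne_top_of_le_ne_top (mul_ne_top (mul_ne_top hC hνu) hμs) ?_
  calc ∫⁻ t in s, ∫⁻ x in u, F t x ∂ν ∂μ ≤ ∫⁻ _ in s, C * ν u ∂μ :=
        setLIntegral_mono' hs fun t ht => (setLIntegral_mono' hu (hF t ht)).trans_eq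
          (setLIntegral_const u C)
    _ = C * ν u * μ s := setLIntegral_const s _

theorem LipschitzWith.comp_absolutelyContinuousOnInterval {X Y : Type*} [PseudoMetricSpace X]
    [PseudoMetricSpace Y] {φ : X → Y} {K : NNReal} (hφ : LipschitzWith K φ) {f : ℝ → X} {a b : ℝ}
    (hf : AbsolutelyContinuousOnInterval f a b) : AbsolutelyContinuousOnInterval (φ ∘ f) a b := by
  unfold AbsolutelyContinuousOnInterval at hf ⊢
  refine squeeze_zero (fun _ => Finset.sum_nonneg fun _ _ => dist_nonneg) (fun E => ?_)
    (by simpa using hf.const_mul (K : ℝ))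
  rw [Finset.mul_sum]
  exact Finset.sum_le_sum fun i _ => hφ.dist_le_mul _ _

theorem ae_deriv_max_zero_eq_indicator {F g : ℝ → ℝ} {s : Set ℝ}
    (hF : ∀ᵐ x, x ∈ s → HasDerivAt F (g x) x) :
    ∀ᵐ x, x ∈ s → deriv (fun y => max (F y) 0) x = {y | 0 < F y}.indicator g x := by
  filter_upwards [hF] with x hx hxs
  have hFx := hx hxs
  rcases lt_trichotomy (F x) 0 with hneg | hzero | hpos
  · have hev : (fun y => max (F y) 0) =ᶠ[nhds x] fun _ => 0 :=
      (hFx.continuousAt.eventually (gt_mem_nhds hneg)).mono fun y hy => max_eq_right hy.le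
    rw [hev.deriv_eq, deriv_const, indicator_of_notMem (by simpa using hneg.le)]
  · rw [indicator_of_notMem (by simp [hzero])]
    refine IsLocalMin.deriv_eq_zero (Eventually.of_forall fun y => ?_)
    simp [hzero]
  · have hev : (fun y => max (F y) 0) =ᶠ[nhds x] F :=
      (hFx.continuousAt.eventually (lt_mem_nhds hpos)).mono fun y hy => max_eq_left hy.le
    rw [hev.deriv_eq, hFx.deriv, indicator_of_mem (by simpa using hpos)]

theorem integral_indicator_pos_primitive {g : ℝ → ℝ} {a b : ℝ}
    (hg : IntervalIntegrable g volume a b) :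
    ∫ s in a..b, {s | 0 < ∫ u in a..s, g u}.indicator g s = max (∫ u in a..b, g u) 0 := by
  have hac : AbsolutelyContinuousOnInterval (fun s => max (∫ u in a..s, g u) 0) a b :=
    (LipschitzWith.id.max_const 0).comp_absolutelyContinuousOnInterval
      (hg.absolutelyContinuousOnInterval_intervalIntegral left_mem_uIcc)
  have hderiv := ae_deriv_max_zero_eq_indicator (s := uIcc a b)
    (hg.ae_hasDerivAt_integral.mono fun x hx hxs => hx hxs a left_mem_uIcc)
  rw [← intervalIntegral.integral_congr_ae (hderiv.mono fun x hx hxs => hx (uIoc_subset_uIcc hxs)),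
    hac.integral_deriv_eq_sub]
  simp

def coneClamp (c : ℝ) (f : ℝ → ℝ) (t : ℝ) : ℝ := max (min (f t) (c * t)) (-(c * t))

def coneVelocity (c : ℝ) (f d : ℝ → ℝ) (t : ℝ) : ℝ :=
  if c * t < f t then c else if c * t < -f t then -c else d t

def kineticEnergy (L : ℝ) (d : ℝ → ℝ) : ℝ≥0∞ := ∫⁻ s in Ioo 0 L, ENNReal.ofReal (d s ^ 2)

section ConeClamp

variable {c t L : ℝ} {f d : ℝ → ℝ}

theorem coneClamp_eq (ht : 0 ≤ c * t) :
    coneClamp c f t = f t - max (f t - c * t) 0 + max (-f t - c * t) 0 := by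
  simp only [coneClamp, max_def, min_def]
  split_ifs <;> linarith

theorem abs_coneClamp_le (ht : 0 ≤ c * t) : |coneClamp c f t| ≤ c * t :=
  abs_le.mpr ⟨le_max_right _ _, max_le (min_le_right _ _) (by linarith)⟩

theorem coneClamp_of_abs_le (h : |f t| ≤ c * t) : coneClamp c f t = f t := by
  obtain ⟨h₁, h₂⟩ := abs_le.mp h
  rw [coneClamp, min_eq_left h₂, max_eq_left h₁]

theorem coneVelocity_eq (ht : 0 ≤ c * t) :
    coneVelocity c f d t = d t - {s | c * s < f s}.indicator (fun s => d s - c) t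
      + {s | c * s < -f s}.indicator (fun s => -d s - c) t := by
  simp only [coneVelocity, indicator, mem_ofPred_eq]
  split_ifs <;> linarith

theorem coneVelocity_mul_sub (ht : 0 ≤ c * t) :
    coneVelocity c f d t * (coneVelocity c f d t - d t) =
      -c * ({s | c * s < f s}.indicator (fun s => d s - c) t
        + {s | c * s < -f s}.indicator (fun s => -d s - c) t) := by
  simp only [coneVelocity, indicator, mem_ofPred_eq]
  split_ifs <;> first | (exfalso; linarith) | ring

theorem measurableSet_mul_lt_primitive (hd : Integrable d) (c : ℝ) :
    MeasurableSet {s | c * s < ∫ u in 0..s, d u} :=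
  measurableSet_lt (by fun_prop) (hd.continuous_primitive 0).measurable

theorem integral_indicator_mul_lt_primitive (hd : Integrable d) (c t : ℝ) :
    ∫ s in 0..t, {s | c * s < ∫ u in 0..s, d u}.indicator (fun s => d s - c) s =
      max ((∫ u in 0..t, d u) - c * t) 0 := by
  have hsub : ∀ s, ∫ u in 0..s, (d u - c) = (∫ u in 0..s, d u) - c * s := fun s => by
    simp [intervalIntegral.integral_sub hd.intervalIntegrable intervalIntegrable_const, mul_comm]
  simpa only [hsub, sub_pos] using
    integral_indicator_pos_primitive (a := 0) (b := t)
      (hd.intervalIntegrable.sub (intervalIntegrable_const (c := c)))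

theorem measurableSet_mul_lt_neg_primitive (hd : Integrable d) (c : ℝ) :
    MeasurableSet {s | c * s < -∫ u in 0..s, d u} :=
  measurableSet_lt (by fun_prop) (hd.continuous_primitive 0).measurable.neg

theorem integral_indicator_mul_lt_neg_primitive (hd : Integrable d) (c t : ℝ) :
    ∫ s in 0..t, {s | c * s < -∫ u in 0..s, d u}.indicator (fun s => -d s - c) s =
      max (-(∫ u in 0..t, d u) - c * t) 0 := by
  simpa only [Pi.neg_apply, intervalIntegral.integral_neg] using
    integral_indicator_mul_lt_primitive hd.neg c t

theorem integral_coneVelocity_primitive (hd : Integrable d) (hc : 0 ≤ c) (ht : 0 ≤ t) :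
    ∫ s in 0..t, coneVelocity c (fun t => ∫ s in 0..t, d s) d s =
      coneClamp c (fun t => ∫ s in 0..t, d s) t := by
  have hdc : IntervalIntegrable (fun s => d s - c) volume 0 t :=
    hd.intervalIntegrable.sub intervalIntegrable_const
  rw [intervalIntegral.integral_congr fun s hs =>
      coneVelocity_eq (mul_nonneg hc (by rw [uIcc_of_le ht] at hs; exact hs.1)),
    intervalIntegral.integral_add, intervalIntegral.integral_sub,
    integral_indicator_mul_lt_neg_primitive hd, integral_indicator_mul_lt_primitive hd,
    coneClamp_eq (mul_nonneg hc ht)]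
  · exact hd.intervalIntegrable
  · exact hdc.indicator (measurableSet_mul_lt_primitive hd c)
  · exact hd.intervalIntegrable.sub (hdc.indicator (measurableSet_mul_lt_primitive hd c))
  · exact (hd.intervalIntegrable.neg.sub intervalIntegrable_const).indicator
      (measurableSet_mul_lt_neg_primitive hd c)

theorem integral_coneVelocity_mul_sub (hd : Integrable d) (hc : 0 ≤ c) (hL : 0 ≤ L)
    (hPL : |∫ s in 0..L, d s| ≤ c * L) :
    ∫ s in 0..L, coneVelocity c (fun t => ∫ s in 0..t, d s) d s *
      (coneVelocity c (fun t => ∫ s in 0..t, d s) d s - d s) = 0 := by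
  have hdc : IntervalIntegrable (fun s => d s - c) volume 0 L :=
    hd.intervalIntegrable.sub intervalIntegrable_const
  obtain ⟨hPL₁, hPL₂⟩ := abs_le.mp hPL
  rw [intervalIntegral.integral_congr fun s hs =>
      coneVelocity_mul_sub (mul_nonneg hc (by rw [uIcc_of_le hL] at hs; exact hs.1)),
    intervalIntegral.integral_const_mul, intervalIntegral.integral_add,
    integral_indicator_mul_lt_neg_primitive hd, integral_indicator_mul_lt_primitive hd,
    max_eq_right (by linarith), max_eq_right (by linarith)]
  · simp
  · exact hdc.indicator (measurableSet_mul_lt_primitive hd c)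
  · exact (hd.intervalIntegrable.neg.sub intervalIntegrable_const).indicator
      (measurableSet_mul_lt_neg_primitive hd c)

theorem coneVelocity_ae_eq {s : Set ℝ} (hs : MeasurableSet s) (hs₀ : s ⊆ Ici 0) (hc : 0 ≤ c) :
    coneVelocity c f d =ᵐ[volume.restrict s] fun t => d t
      - {s | c * s < f s}.indicator (fun s => d s - c) t
      + {s | c * s < -f s}.indicator (fun s => -d s - c) t :=
  ae_restrict_of_forall_mem hs fun _ ht => coneVelocity_eq (mul_nonneg hc (hs₀ ht))

theorem aestronglyMeasurable_coneVelocity {s : Set ℝ} (hs : MeasurableSet s) (hs₀ : s ⊆ Ici 0)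
    (hd : Integrable d) (hc : 0 ≤ c) :
    AEStronglyMeasurable (coneVelocity c (fun t => ∫ s in 0..t, d s) d) (volume.restrict s) := by
  have hdm := hd.aestronglyMeasurable.restrict (s := s)
  refine AEStronglyMeasurable.congr ?_ (coneVelocity_ae_eq hs hs₀ hc).symm
  exact (hdm.sub ((hdm.sub aestronglyMeasurable_const).indicator
    (measurableSet_mul_lt_primitive hd c))).add
    ((hdm.neg.sub aestronglyMeasurable_const).indicator (measurableSet_mul_lt_neg_primitive hd c))

theorem memLp_coneVelocity {p : ℝ≥0∞} {s : Set ℝ} [IsFiniteMeasure (volume.restrict s)]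
    (hs : MeasurableSet s) (hs₀ : s ⊆ Ici 0) (hd : Integrable d) (hc : 0 ≤ c)
    (hdp : MemLp d p (volume.restrict s)) :
    MemLp (coneVelocity c (fun t => ∫ s in 0..t, d s) d) p (volume.restrict s) := by
  refine MemLp.ae_eq (coneVelocity_ae_eq hs hs₀ hc).symm ?_
  exact (hdp.sub ((hdp.sub (memLp_const c)).indicator (measurableSet_mul_lt_primitive hd c))).add
    ((hdp.neg.sub (memLp_const c)).indicator (measurableSet_mul_lt_neg_primitive hd c))

theorem kineticEnergy_eq_ofReal_integral {f : ℝ → ℝ} (hf : MemLp f 2 (volume.restrict (Ioo 0 L))) :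
    kineticEnergy L f = ENNReal.ofReal (∫ s in Ioo 0 L, f s ^ 2) :=
  (ofReal_integral_eq_lintegral_ofReal hf.integrable_sq (ae_of_all _ fun _ => sq_nonneg _)).symm

theorem memLp_two_of_kineticEnergy_ne_top {f : ℝ → ℝ}
    (hf : AEStronglyMeasurable f (volume.restrict (Ioo 0 L))) (h : kineticEnergy L f ≠ ⊤) :
    MemLp f 2 (volume.restrict (Ioo 0 L)) :=
  (memLp_two_iff_integrable_sq hf).mpr ⟨hf.pow 2,
    (hasFiniteIntegral_iff_ofReal (ae_of_all _ fun _ => sq_nonneg _)).mpr h.lt_top⟩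

theorem kineticEnergy_coneVelocity_add_kineticEnergy_sub (hd : Integrable d) (hc : 0 ≤ c)
    (hL : 0 ≤ L) (hPL : |∫ s in 0..L, d s| ≤ c * L) (hfin : kineticEnergy L d ≠ ⊤) :
    kineticEnergy L (coneVelocity c (fun t => ∫ s in 0..t, d s) d) +
      kineticEnergy L (fun s => coneVelocity c (fun t => ∫ s in 0..t, d s) d s - d s) =
      kineticEnergy L d := by
  set e := coneVelocity c (fun t => ∫ s in 0..t, d s) d
  have hIoo : Ioo 0 L ⊆ Ici (0 : ℝ) := fun _ ht => ht.1.le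
  have hd₂ := memLp_two_of_kineticEnergy_ne_top hd.aestronglyMeasurable.restrict hfin
  have he₂ : MemLp e 2 (volume.restrict (Ioo 0 L)) :=
    memLp_coneVelocity measurableSet_Ioo hIoo hd hc hd₂
  have hed₂ : MemLp (fun s => e s - d s) 2 (volume.restrict (Ioo 0 L)) := he₂.sub hd₂
  have horth : ∫ s in Ioo 0 L, e s * (e s - d s) = 0 := by
    rw [← integral_Ioc_eq_integral_Ioo, ← intervalIntegral.integral_of_le hL]
    exact integral_coneVelocity_mul_sub hd hc hL hPL
  have hpyth : ∫ s in Ioo 0 L, d s ^ 2 =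
      (∫ s in Ioo 0 L, e s ^ 2) + ∫ s in Ioo 0 L, (e s - d s) ^ 2 := by
    rw [← integral_add he₂.integrable_sq hed₂.integrable_sq]
    have hsum : Integrable (fun s => e s ^ 2 + (e s - d s) ^ 2) (volume.restrict (Ioo 0 L)) :=
      he₂.integrable_sq.add hed₂.integrable_sq
    have hcross : Integrable (fun s => 2 * (e s * (e s - d s))) (volume.restrict (Ioo 0 L)) :=
      (he₂.integrable_mul hed₂).const_mul 2
    calc ∫ s in Ioo 0 L, d s ^ 2
        = ∫ s in Ioo 0 L, (e s ^ 2 + (e s - d s) ^ 2) - 2 * (e s * (e s - d s)) := by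
          congr 1; ext s; ring
      _ = _ := by
          rw [integral_sub hsum hcross, integral_const_mul, horth, mul_zero, sub_zero]
  rw [kineticEnergy_eq_ofReal_integral he₂, kineticEnergy_eq_ofReal_integral hed₂,
    kineticEnergy_eq_ofReal_integral hd₂, hpyth, ofReal_add (integral_nonneg fun _ => sq_nonneg _)
      (integral_nonneg fun _ => sq_nonneg _)]

theorem abs_primitive_le_of_kineticEnergy_sub_eq_zero (hd : Integrable d) (hc : 0 ≤ c)
    (h : kineticEnergy L (fun s => coneVelocity c (fun t => ∫ s in 0..t, d s) d s - d s) = 0) :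
    ∀ t ∈ Icc 0 L, |∫ s in 0..t, d s| ≤ c * t := by
  intro t ht
  have he := aestronglyMeasurable_coneVelocity (s := Ioo 0 L) measurableSet_Ioo
    (fun _ ht => ht.1.le) hd hc
  have hae : ∀ᵐ s ∂volume.restrict (Ioc 0 L),
      coneVelocity c (fun t => ∫ s in 0..t, d s) d s = d s := by
    rw [← Measure.restrict_congr_set Ioo_ae_eq_Ioc]
    filter_upwards [(lintegral_eq_zero_iff' ((he.sub hd.aestronglyMeasurable.restrict).aemeasurable
      |>.pow_const 2 |>.ennreal_ofReal)).mp h] with s hs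
    simpa [sub_eq_zero, sq_nonpos_iff] using hs
  have hprim : ∫ s in 0..t, d s = coneClamp c (fun t => ∫ s in 0..t, d s) t := by
    rw [← integral_coneVelocity_primitive hd hc ht.1]
    refine intervalIntegral.integral_congr_ae ?_
    filter_upwards [(ae_restrict_iff' measurableSet_Ioc).mp hae] with s hs hst
    rw [uIoc_of_le ht.1] at hst
    exact (hs ⟨hst.1, hst.2.trans ht.2⟩).symm
  rw [hprim]
  exact abs_coneClamp_le (mul_nonneg hc ht.1)

theorem kineticEnergy_coneVelocity_primitive_le (hd : Integrable d) (hc : 0 ≤ c) (hL : 0 ≤ L)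
    (hPL : |∫ s in 0..L, d s| ≤ c * L) :
    kineticEnergy L (coneVelocity c (fun t => ∫ s in 0..t, d s) d) ≤ kineticEnergy L d := by
  by_cases hfin : kineticEnergy L d = ⊤
  · simp [hfin]
  · rw [← kineticEnergy_coneVelocity_add_kineticEnergy_sub hd hc hL hPL hfin]
    exact le_self_add

theorem kineticEnergy_coneVelocity_primitive_lt (hd : Integrable d) (hc : 0 ≤ c) (hL : 0 ≤ L)
    (hPL : |∫ s in 0..L, d s| ≤ c * L) (hfin : kineticEnergy L d ≠ ⊤)
    (hexit : ∃ t ∈ Icc 0 L, c * t < |∫ s in 0..t, d s|) :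
    kineticEnergy L (coneVelocity c (fun t => ∫ s in 0..t, d s) d) < kineticEnergy L d := by
  rw [← kineticEnergy_coneVelocity_add_kineticEnergy_sub hd hc hL hPL hfin]
  refine ENNReal.lt_add_right (ne_top_of_le_ne_top hfin
    (kineticEnergy_coneVelocity_primitive_le hd hc hL hPL)) fun h => ?_
  obtain ⟨t, ht, hlt⟩ := hexit
  exact (abs_primitive_le_of_kineticEnergy_sub_eq_zero hd hc h t ht).not_gt hlt

theorem kineticEnergy_congr {g : ℝ → ℝ} (h : EqOn f g (Ioo 0 L)) :
    kineticEnergy L f = kineticEnergy L g :=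
  setLIntegral_congr_fun measurableSet_Ioo fun _ hs => by rw [h hs]

theorem EqOn.coneVelocity {g d' : ℝ → ℝ} {s : Set ℝ} (hf : EqOn f g s) (hd : EqOn d d' s) :
    EqOn (coneVelocity c f d) (coneVelocity c g d') s := fun t ht => by
  simp only [_root_.coneVelocity, hf ht, hd ht]

theorem EqOn.coneClamp {g : ℝ → ℝ} {s : Set ℝ} (hf : EqOn f g s) :
    EqOn (coneClamp c f) (coneClamp c g) s := fun t ht => by
  simp only [_root_.coneClamp, hf ht]

theorem eqOn_primitive_indicator (hf : ∀ t ∈ Icc 0 L, f t = ∫ s in 0..t, d s) :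
    EqOn f (fun t => ∫ s in 0..t, (Icc 0 L).indicator d s) (Icc 0 L) := fun t ht => by
  rw [hf t ht]
  refine intervalIntegral.integral_congr fun s hs => (indicator_of_mem ?_ d).symm
  rw [uIcc_of_le ht.1] at hs
  exact ⟨hs.1, hs.2.trans ht.2⟩

theorem integrableOn_coneVelocity (hd : IntegrableOn d (Icc 0 L))
    (hf : ∀ t ∈ Icc 0 L, f t = ∫ s in 0..t, d s) (hc : 0 ≤ c) :
    IntegrableOn (coneVelocity c f d) (Icc 0 L) := by
  have hd' := hd.integrable_indicator measurableSet_Icc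
  have hE := EqOn.coneVelocity (c := c) (eqOn_primitive_indicator hf)
    fun t ht => (indicator_of_mem ht d).symm
  refine IntegrableOn.congr_fun ?_ hE.symm measurableSet_Icc
  rw [IntegrableOn, ← memLp_one_iff_integrable] at hd ⊢
  exact memLp_coneVelocity measurableSet_Icc (fun _ ht => ht.1) hd' hc
    (hd.ae_eq (indicator_ae_eq_restrict measurableSet_Icc).symm)

theorem integral_coneVelocity (hd : IntegrableOn d (Icc 0 L))
    (hf : ∀ t ∈ Icc 0 L, f t = ∫ s in 0..t, d s) (hc : 0 ≤ c) {t : ℝ} (ht : t ∈ Icc 0 L) :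
    ∫ s in 0..t, coneVelocity c f d s = coneClamp c f t := by
  have hE := EqOn.coneVelocity (c := c) (eqOn_primitive_indicator hf)
    fun t ht => (indicator_of_mem ht d).symm
  rw [EqOn.coneClamp (eqOn_primitive_indicator hf) ht, ← integral_coneVelocity_primitive
    (hd.integrable_indicator measurableSet_Icc) hc ht.1]
  refine intervalIntegral.integral_congr fun s hs => hE ?_
  rw [uIcc_of_le ht.1] at hs
  exact ⟨hs.1, hs.2.trans ht.2⟩

theorem kineticEnergy_coneVelocity_le (hd : IntegrableOn d (Icc 0 L))
    (hf : ∀ t ∈ Icc 0 L, f t = ∫ s in 0..t, d s) (hc : 0 ≤ c) (hL : 0 ≤ L)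
    (hfL : |f L| ≤ c * L) :
    kineticEnergy L (coneVelocity c f d) ≤ kineticEnergy L d := by
  have hfP := eqOn_primitive_indicator hf
  have hdd' : EqOn d ((Icc 0 L).indicator d) (Icc 0 L) := fun t ht => (indicator_of_mem ht d).symm
  rw [kineticEnergy_congr ((EqOn.coneVelocity hfP hdd').mono Ioo_subset_Icc_self),
    kineticEnergy_congr (hdd'.mono Ioo_subset_Icc_self)]
  exact kineticEnergy_coneVelocity_primitive_le (hd.integrable_indicator measurableSet_Icc) hc hL
    (by rwa [hfP (right_mem_Icc.mpr hL)] at hfL)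

theorem kineticEnergy_coneVelocity_lt (hd : IntegrableOn d (Icc 0 L))
    (hf : ∀ t ∈ Icc 0 L, f t = ∫ s in 0..t, d s) (hc : 0 ≤ c) (hL : 0 ≤ L)
    (hfL : |f L| ≤ c * L) (hfin : kineticEnergy L d ≠ ⊤)
    (hexit : ∃ t ∈ Icc 0 L, c * t < |f t|) :
    kineticEnergy L (coneVelocity c f d) < kineticEnergy L d := by
  have hfP := eqOn_primitive_indicator hf
  have hdd' : EqOn d ((Icc 0 L).indicator d) (Icc 0 L) := fun t ht => (indicator_of_mem ht d).symm
  have hK := kineticEnergy_congr (hdd'.mono Ioo_subset_Icc_self)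
  rw [kineticEnergy_congr ((EqOn.coneVelocity hfP hdd').mono Ioo_subset_Icc_self), hK]
  rw [hK] at hfin
  obtain ⟨t, ht, hlt⟩ := hexit
  exact kineticEnergy_coneVelocity_primitive_lt (hd.integrable_indicator measurableSet_Icc) hc hL
    (by rwa [hfP (right_mem_Icc.mpr hL)] at hfL) hfin ⟨t, ht, by rwa [hfP ht] at hlt⟩

end ConeClamp

section Lagrangian

def multiplicityEnergy (Φ T : ℝ) (X : ℝ → ℝ → ℝ) : ℝ≥0∞ :=
  ∫⁻ t in Ioo 0 T, ∫⁻ x in Icc (-(Φ/2)) (Φ/2), (mult Φ X (X t x) t)⁻¹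

variable {Φ T lam : ℝ} {X D : ℝ → ℝ → ℝ}

theorem measurable_kineticEnergy (hD : Measurable (Function.uncurry D)) (L : ℝ) :
    Measurable fun x => kineticEnergy L (D · x) :=
  (hD.pow_const 2).ennreal_ofReal.lintegral_prod_left'

theorem lagEnergy_eq (hD : Measurable (Function.uncurry D)) :
    lagEnergy Φ T lam X D =
      multiplicityEnergy Φ T X +
        ∫⁻ x in Icc (-(Φ/2)) (Φ/2), kineticEnergy (Tlam T lam) (D · x) := by
  rw [lagEnergy, lintegral_lintegral_swap (f := fun t x => ENNReal.ofReal (D t x ^ 2))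
    (hD.pow_const 2).ennreal_ofReal.aemeasurable]
  rfl

theorem mult_le_mult_comp (ψ : ℝ → ℝ → ℝ) (t x : ℝ) :
    mult Φ X (X t x) t ≤ mult Φ (fun t x => ψ t (X t x)) (ψ t (X t x)) t :=
  measure_mono fun _ ⟨hx, h⟩ => ⟨hx, by simp only [h]⟩

theorem multiplicityEnergy_comp_le (ψ : ℝ → ℝ → ℝ) :
    multiplicityEnergy Φ T (fun t x => ψ t (X t x)) ≤ multiplicityEnergy Φ T X :=
  lintegral_mono fun t => lintegral_mono fun x => ENNReal.inv_le_inv.mpr (mult_le_mult_comp ψ t x)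

theorem lagE_le (h : LagAdm Φ (Tlam T lam) 0 X D) : lagE Φ T lam 0 ≤ lagEnergy Φ T lam X D :=
  iInf₂_le_of_le X D (iInf_le _ h)

theorem lagAdm_coneClamp {L c : ℝ} (h : LagAdm Φ L 0 X D) (hc : 0 ≤ c) (hcL : c * L = Φ / 2) :
    LagAdm Φ L 0 (fun t x => coneClamp c (X · x) t)
      (fun t x => coneVelocity c (X · x) (D · x) t) := by
  have hX := h.measX
  have hD := h.measD
  refine ⟨(hX.min (by fun_prop)).max (by fun_prop), ?_, ?_⟩
  · exact Measurable.ite (measurableSet_lt (by fun_prop) hX) measurable_const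
      (Measurable.ite (measurableSet_lt (by fun_prop) hX.neg) measurable_const hD)
  filter_upwards [h.curves, ae_restrict_mem measurableSet_Icc] with x ⟨hX0, hXL, hDx, hXD⟩ hx
  have hf : ∀ t ∈ Icc 0 L, X t x = ∫ s in 0..t, D s x := fun t ht => (hXD t ht).trans (zero_add _)
  refine ⟨by simp [coneClamp, hX0], ?_, integrableOn_coneVelocity hDx hf hc, fun t ht => ?_⟩
  · rw [coneClamp_of_abs_le (by rw [hXL, hcL]; exact abs_le.mpr hx)]
    exact hXL
  · rw [zero_add, integral_coneVelocity hDx hf hc ht]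

theorem lipschitzWith_max_sub_zero (T : ℝ) : LipschitzWith 1 fun t : ℝ => max (t - T) 0 :=
  (LipschitzWith.of_dist_le_mul fun a b => by simp [Real.dist_eq]).max_const 0

theorem abs_deriv_max_sub_zero_le (T s : ℝ) : |deriv (fun t : ℝ => max (t - T) 0) s| ≤ 1 := by
  simpa using norm_deriv_le_of_lipschitz (lipschitzWith_max_sub_zero T)

theorem lagAdm_delayed_linear (hT : 0 < T) (hlam : 0 < lam) :
    LagAdm Φ (Tlam T lam) 0 (fun t x => lam * max (t - T) 0 * x)
      (fun t x => lam * deriv (fun t => max (t - T) 0) t * x) := by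
  have hm := measurable_deriv fun t : ℝ => max (t - T) 0
  refine ⟨by fun_prop, ((hm.comp measurable_fst).const_mul lam).mul measurable_snd,
    ae_of_all _ fun x => ⟨by simp [hT.le], ?_, ?_, fun t _ => ?_⟩⟩
  · simp only [Tlam, add_sub_cancel_left, max_eq_left (one_div_pos.mpr hlam).le]
    field_simp
  · refine Measure.integrableOn_of_bounded (M := lam * |x|) measure_Icc_lt_top.ne
      (((hm.const_mul lam).mul_const x).aestronglyMeasurable) (ae_of_all _ fun s => ?_)
    rw [Real.norm_eq_abs, abs_mul, abs_mul, abs_of_pos hlam]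
    exact mul_le_mul_of_nonneg_right
      (mul_le_of_le_one_right hlam.le (abs_deriv_max_sub_zero_le T s)) (abs_nonneg x)
  · have hac := (lipschitzWith_max_sub_zero T).lipschitzOnWith.absolutelyContinuousOnInterval
      (a := 0) (b := t)
    rw [zero_add, intervalIntegral.integral_mul_const, intervalIntegral.integral_const_mul,
      hac.integral_deriv_eq_sub]
    simp [hT.le]

theorem lagE_ne_top (hΦ : 0 < Φ) (hT : 0 < T) (hlam : 0 < lam) : lagE Φ T lam 0 ≠ ⊤ := by
  refine ne_top_of_le_ne_top ?_ (lagE_le (lagAdm_delayed_linear hT hlam))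
  have hI : volume (Icc (-(Φ/2)) (Φ/2)) = ENNReal.ofReal Φ := by simp [Real.volume_Icc]
  refine add_ne_top.mpr ⟨setLIntegral_setLIntegral_ne_top measurableSet_Ioo measurableSet_Icc
    measure_Ioo_lt_top.ne measure_Icc_lt_top.ne (C := (ENNReal.ofReal Φ)⁻¹)
    (inv_ne_top.mpr (ofReal_pos.mpr hΦ).ne') fun t ht x _ => ?_,
    setLIntegral_setLIntegral_ne_top measurableSet_Ioo measurableSet_Icc measure_Ioo_lt_top.ne
    measure_Icc_lt_top.ne (C := ENNReal.ofReal ((lam * (Φ/2)) ^ 2)) ofReal_ne_top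
    fun t _ x hx => ?_⟩
  · have h0 : max (t - T) 0 = 0 := max_eq_right (by linarith [ht.2])
    exact ENNReal.inv_le_inv.mpr (hI ▸ measure_mono fun y hy => ⟨hy, by simp [h0]⟩)
  · refine ofReal_le_ofReal (sq_le_sq.mpr ?_)
    rw [abs_mul, abs_mul, abs_of_pos hlam, abs_of_pos (by positivity : 0 < lam * (Φ/2))]
    calc lam * |deriv (fun t => max (t - T) 0) t| * |x| ≤ lam * 1 * (Φ/2) := by
          gcongr
          · exact abs_deriv_max_sub_zero_le T t
          · exact abs_le.mpr hx
      _ = lam * (Φ/2) := by ring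

theorem lintegral_kineticEnergy_coneVelocity_lt {L c : ℝ} (hadm : LagAdm Φ L 0 X D) (hc : 0 ≤ c)
    (hL : 0 ≤ L) (hcL : c * L = Φ / 2)
    (hfin : ∫⁻ x in Icc (-(Φ/2)) (Φ/2), kineticEnergy L (D · x) ≠ ⊤)
    (hexit : ¬∀ᵐ x ∂(volume.restrict (Icc (-(Φ/2)) (Φ/2))), ∀ t ∈ Icc 0 L, |X t x| ≤ c * t) :
    ∫⁻ x in Icc (-(Φ/2)) (Φ/2), kineticEnergy L (coneVelocity c (X · x) (D · x)) <
      ∫⁻ x in Icc (-(Φ/2)) (Φ/2), kineticEnergy L (D · x) := by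
  have hcurve : ∀ᵐ x ∂(volume.restrict (Icc (-(Φ/2)) (Φ/2))),
      IntegrableOn (D · x) (Icc 0 L) ∧ (∀ t ∈ Icc 0 L, X t x = ∫ s in 0..t, D s x) ∧
        |X L x| ≤ c * L ∧ kineticEnergy L (D · x) ≠ ⊤ := by
    filter_upwards [hadm.curves, ae_restrict_mem measurableSet_Icc,
      ae_lt_top (measurable_kineticEnergy hadm.measD L) hfin] with x ⟨_, hXL, hDx, hXD⟩ hx hK
    exact ⟨hDx, fun t ht => (hXD t ht).trans (zero_add _), by rw [hXL, hcL]; exact abs_le.mpr hx,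
      hK.ne⟩
  have hle := hcurve.mono fun x ⟨hDx, hf, hfL, _⟩ => kineticEnergy_coneVelocity_le hDx hf hc hL hfL
  refine lintegral_strict_mono_of_ae_le_of_frequently_ae_lt
    (measurable_kineticEnergy hadm.measD L).aemeasurable
    (ne_top_of_le_ne_top hfin (lintegral_mono_ae hle)) hle ?_
  refine (not_eventually.mp hexit).mp (hcurve.mono fun x ⟨hDx, hf, hfL, hK⟩ hx => ?_)
  push Not at hx
  exact (kineticEnergy_coneVelocity_lt hDx hf hc hL hfL hK hx).ne

theorem ae_abs_le_of_lagEnergy_eq_lagE {c : ℝ} (hadm : LagAdm Φ (Tlam T lam) 0 X D)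
    (hmin : lagEnergy Φ T lam X D = lagE Φ T lam 0) (hfin : lagE Φ T lam 0 ≠ ⊤) (hc : 0 ≤ c)
    (hL : 0 ≤ Tlam T lam) (hcL : c * Tlam T lam = Φ / 2) :
    ∀ᵐ x ∂(volume.restrict (Icc (-(Φ/2)) (Φ/2))), ∀ t ∈ Icc 0 (Tlam T lam), |X t x| ≤ c * t := by
  have hY := lagAdm_coneClamp hadm hc hcL
  rw [← hmin, lagEnergy_eq hadm.measD] at hfin
  obtain ⟨hMfin, hKfin⟩ := add_ne_top.mp hfin
  by_contra hexit
  have hmult : multiplicityEnergy Φ T (fun t x => coneClamp c (X · x) t) ≤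
      multiplicityEnergy Φ T X :=
    multiplicityEnergy_comp_le fun t y => max (min y (c * t)) (-(c * t))
  have hlt : lagEnergy Φ T lam (fun t x => coneClamp c (X · x) t)
      (fun t x => coneVelocity c (X · x) (D · x) t) < lagEnergy Φ T lam X D := by
    rw [lagEnergy_eq hY.measD, lagEnergy_eq hadm.measD]
    exact ENNReal.add_lt_add_of_le_of_lt (ne_top_of_le_ne_top hMfin hmult) hmult
      (lintegral_kineticEnergy_coneVelocity_lt hadm hc hL hcL hKfin hexit)
  exact hlt.not_ge (hmin ▸ lagE_le hY)

/-- cone property. If `X` is a minimizer of `E(Φ,T,λ)`, then for every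
`s ∈ [0,T_λ]` and a.e. `x ∈ [-Φ/2,Φ/2]` one has `|X(s,x)| ≤ (s/T_λ)(Φ/2)`; in particular
a.e. `|X(T,x)| ≤ (λT/(1+λT))·(Φ/2)`. -/
theorem statement19 (Φ T lam : ℝ) (hΦ : 0 < Φ) (hT : 0 < T) (hlam : 0 < lam)
    (X D : ℝ → ℝ → ℝ) (hadm : LagAdm Φ (Tlam T lam) 0 X D)
    (hmin : lagEnergy Φ T lam X D = lagE Φ T lam 0) :
    (∀ s ∈ Icc (0:ℝ) (Tlam T lam),
      ∀ᵐ x ∂(volume.restrict (Icc (-(Φ/2)) (Φ/2))),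
        |X s x| ≤ (s / Tlam T lam) * (Φ/2)) ∧
    (∀ᵐ x ∂(volume.restrict (Icc (-(Φ/2)) (Φ/2))),
      |X T x| ≤ (lam * T / (1 + lam * T)) * (Φ/2)) := by
  have hL : 0 < Tlam T lam := by unfold Tlam; positivity
  have hcone := ae_abs_le_of_lagEnergy_eq_lagE hadm hmin (lagE_ne_top hΦ hT hlam)
    (by positivity : 0 ≤ (Φ/2) / Tlam T lam) hL.le (div_mul_cancel₀ _ hL.ne')
  refine ⟨fun s hs => hcone.mono fun x hx => (hx s hs).trans_eq (by ring),
    hcone.mono fun x hx => (hx T ⟨hT.le, ?_⟩).trans_eq ?_⟩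
  · unfold Tlam; linarith [one_div_pos.mpr hlam]
  · unfold Tlam; field_simp; ring
end Lagrangian
end
end
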